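/- arXiv:1111.5066 — 7 statements merged into one kernel-verified Lean document; each statement's English description precedes it below -/
import Mathlib

section
/- Let F : A → ℝ be a Minkowski conic norm on V and let v₁, v₂ ∈ A be such that t v₁ + (1−t) v₂ ∈ A for every t ∈ (0,1). Then: (a) the triangle inequality F(v₁ + v₂) ≤ F(v₁) + F(v₂) holds, with equality only if v₁ = λ v₂ or v₂ = λ v₁ for some λ ≥ 0; and (b) if moreover v₁ ≠ 0, then the fundamental inequality g_{v₁}(v₁, v₂) ≤ F(v₁) F(v₂) holds, with equality if and only if v₂ = λ v₁ for some λ ≥ 0. -/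
open Set Topology

variable {V : Type*} [NormedAddCommGroup V] [NormedSpace ℝ V] [FiniteDimensional ℝ V]

/-- A conic domain of `V`: a nonempty open subset closed under positive scalar multiplication. -/
def IsConicDomain (A : Set V) : Prop :=
  A.Nonempty ∧ IsOpen A ∧ ∀ v ∈ A, ∀ l : ℝ, 0 < l → l • v ∈ A

/-- The fundamental tensor `g_v(u,w) = ∂²/∂t∂s [½ F(v+tu+sw)²]|₀`. -/
noncomputable def fundTensor (F : V → ℝ) (v u w : V) : ℝ :=
  deriv (fun t : ℝ => deriv (fun s : ℝ => (1 / 2) * (F (v + t • u + s • w)) ^ 2) 0) 0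

/-- A Minkowski conic pseudo-norm on `V` with conic domain `A`
(the function is defined on all of `V`, but only its values on `A` are relevant). -/
structure IsMinkowskiConicPseudoNorm (A : Set V) (F : V → ℝ) : Prop where
  conic : IsConicDomain A
  nonneg : ∀ v ∈ A, 0 ≤ F v
  eq_zero : ∀ v ∈ A, F v = 0 → v = 0
  homog : ∀ v ∈ A, ∀ l : ℝ, 0 < l → F (l • v) = l * F v
  smooth : ContDiffOn ℝ (⊤ : ℕ∞) F (A \ {0})

/-- A Minkowski conic norm: a Minkowski conic pseudo-norm with positive definite
fundamental tensor at every nonzero vector of its domain. -/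
def IsMinkowskiConicNorm (A : Set V) (F : V → ℝ) : Prop :=
  IsMinkowskiConicPseudoNorm A F ∧
    ∀ v ∈ A, v ≠ 0 → ∀ w : V, w ≠ 0 → 0 < fundTensor F v w w

/-- The angular metric `h_v(w,w) = g_v(w,w) − g_v(v,w)²/F(v)²`. -/
noncomputable def angular (F : V → ℝ) (v w : V) : ℝ :=
  fundTensor F v w w - (fundTensor F v v w) ^ 2 / (F v) ^ 2

set_option linter.unusedSectionVars false

noncomputable def Gh (F : V → ℝ) : V → ℝ := fun x => (1 / 2) * (F x) ^ 2
section Aux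
variable {A : Set V} {F : V → ℝ}
theorem hAopen (hF : IsMinkowskiConicNorm A F) : IsOpen (A \ {0} : Set V) :=
  hF.1.conic.2.1.sdiff isClosed_singleton
theorem Gsmooth (hF : IsMinkowskiConicNorm A F) : ContDiffOn ℝ 2 (Gh F) (A \ {0}) :=
  contDiffOn_const.mul ((hF.1.smooth.of_le (WithTop.coe_le_coe.mpr (le_top : (2 : ℕ∞) ≤ ⊤))).pow 2)
theorem GcontAt (hF : IsMinkowskiConicNorm A F) {z : V} (hz : z ∈ A \ {0}) :
    ContDiffAt ℝ 2 (Gh F) z :=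
  (Gsmooth hF).contDiffAt ((hAopen hF).mem_nhds hz)
theorem Gdiff (hF : IsMinkowskiConicNorm A F) {z : V} (hz : z ∈ A \ {0}) :
    DifferentiableAt ℝ (Gh F) z :=
  (GcontAt hF hz).differentiableAt two_ne_zero
theorem line_hasDerivAt (z w : V) (t₀ : ℝ) :
    HasDerivAt (fun t : ℝ => z + t • w) w t₀ := by
  simpa using ((hasDerivAt_id t₀).smul_const w).const_add z
theorem Gline_hasDerivAt (hF : IsMinkowskiConicNorm A F) {z w : V} {t₀ : ℝ}
    (hz : z + t₀ • w ∈ A \ {0}) :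
    HasDerivAt (fun t : ℝ => Gh F (z + t • w)) (fderiv ℝ (Gh F) (z + t₀ • w) w) t₀ := by
  exact (Gdiff hF hz).hasFDerivAt.comp_hasDerivAt t₀ (line_hasDerivAt z w t₀)
theorem inner_deriv (hF : IsMinkowskiConicNorm A F) {z : V} (hz : z ∈ A \ {0}) (w : V) :
    deriv (fun s : ℝ => Gh F (z + s • w)) 0 = fderiv ℝ (Gh F) z w := by
  have hz' : z + (0 : ℝ) • w ∈ A \ {0} := by simpa using hz
  have := (Gline_hasDerivAt hF hz').deriv
  simpa using this

-- new part
theorem mem_nhds_line (hF : IsMinkowskiConicNorm A F) {z : V} (hz : z ∈ A \ {0}) (u : V) :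
    ∀ᶠ t : ℝ in 𝓝 0, z + t • u ∈ A \ {0} := by
  have hc : ContinuousAt (fun t : ℝ => z + t • u) 0 := by
    exact (continuous_const.add (continuous_id.smul continuous_const)).continuousAt
  exact hc.preimage_mem_nhds ((hAopen hF).mem_nhds (by simpa using hz))

theorem fundTensor_eq (hF : IsMinkowskiConicNorm A F) {z : V} (hz : z ∈ A \ {0}) (u w : V) :
    fundTensor F z u w = deriv (fun t : ℝ => fderiv ℝ (Gh F) (z + t • u) w) 0 := by
  unfold fundTensor
  apply Filter.EventuallyEq.deriv_eq
  filter_upwards [mem_nhds_line hF hz u] with t ht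
  have := inner_deriv hF ht w
  simpa [Gh, add_assoc] using this

theorem G_homog (hF : IsMinkowskiConicNorm A F) {x : V} (hx : x ∈ A) {l : ℝ} (hl : 0 < l) :
    Gh F (l • x) = l ^ 2 * Gh F x := by
  simp only [Gh, hF.1.homog x hx l hl]; ring

theorem euler (hF : IsMinkowskiConicNorm A F) {x : V} (hx : x ∈ A \ {0}) :
    fderiv ℝ (Gh F) x x = (F x) ^ 2 := by
  have hl1 : HasDerivAt (fun l : ℝ => l • x) x 1 := by
    simpa using (hasDerivAt_id (1 : ℝ)).smul_const x
  have h1 : HasDerivAt (fun l : ℝ => Gh F (l • x)) (fderiv ℝ (Gh F) x x) 1 := by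
    have h0 : HasFDerivAt (Gh F) (fderiv ℝ (Gh F) x) ((1 : ℝ) • x) := by
      simpa using (Gdiff hF hx).hasFDerivAt
    exact h0.comp_hasDerivAt 1 hl1
  have h2 : HasDerivAt (fun l : ℝ => l ^ 2 * Gh F x) (2 * Gh F x) 1 := by
    simpa using (hasDerivAt_pow 2 (1 : ℝ)).mul_const (Gh F x)
  have hev : (fun l : ℝ => l ^ 2 * Gh F x) =ᶠ[𝓝 (1 : ℝ)] (fun l : ℝ => Gh F (l • x)) := by
    filter_upwards [eventually_gt_nhds zero_lt_one] with l hl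
    exact (G_homog hF hx.1 hl).symm
  have h1' : HasDerivAt (fun l : ℝ => l ^ 2 * Gh F x) (fderiv ℝ (Gh F) x x) 1 :=
    h1.congr_of_eventuallyEq hev
  have := h1'.unique h2
  rw [this]; unfold Gh; ring

theorem smul_mem (hF : IsMinkowskiConicNorm A F) {x : V} (hx : x ∈ A \ {0}) {l : ℝ} (hl : 0 < l) :
    l • x ∈ A \ {0} := by
  refine ⟨hF.1.conic.2.2 x hx.1 l hl, ?_⟩
  simp only [mem_singleton_iff, smul_eq_zero, not_or]
  exact ⟨ne_of_gt hl, by simpa [mem_singleton_iff] using hx.2⟩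

theorem fderiv_homog (hF : IsMinkowskiConicNorm A F) {x : V} (hx : x ∈ A \ {0}) {l : ℝ}
    (hl : 0 < l) (y : V) :
    fderiv ℝ (Gh F) (l • x) y = l * fderiv ℝ (Gh F) x y := by
  have hlx : l • x ∈ A \ {0} := smul_mem hF hx hl
  have hsm : HasFDerivAt (fun z : V => l • z) (l • ContinuousLinearMap.id ℝ V) x := by
    exact (hasFDerivAt_id x).const_smul l
  have hcomp : HasFDerivAt (fun z : V => Gh F (l • z))
      (l • fderiv ℝ (Gh F) (l • x)) x := by
    have h := ((Gdiff hF hlx).hasFDerivAt).comp x hsm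
    refine h.congr_fderiv ?_
    ext v; simp
  have hev : (fun z : V => l ^ 2 * Gh F z) =ᶠ[𝓝 x] (fun z : V => Gh F (l • z)) := by
    have hpre : (fun z : V => l • z) ⁻¹' (A \ {0}) ∈ 𝓝 x := by
      have hc : ContinuousAt (fun z : V => l • z) x := (continuous_const_smul l).continuousAt
      exact hc.preimage_mem_nhds ((hAopen hF).mem_nhds hlx)
    filter_upwards [(hAopen hF).mem_nhds hx, hpre] with z hz1 _
    exact (G_homog hF hz1.1 hl).symm
  have hcomp' : HasFDerivAt (fun z : V => l ^ 2 * Gh F z)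
      (l • fderiv ℝ (Gh F) (l • x)) x := hcomp.congr_of_eventuallyEq hev
  have h2 : HasFDerivAt (fun z : V => l ^ 2 * Gh F z)
      ((l ^ 2) • fderiv ℝ (Gh F) x) x := by
    simpa [smul_eq_mul] using (Gdiff hF hx).hasFDerivAt.const_mul (l ^ 2)
  have heq := hcomp'.unique h2
  have := congrArg (fun (T : V →L[ℝ] ℝ) => T y) heq
  simp only [ContinuousLinearMap.smul_apply, smul_eq_mul] at this
  have hl0 : l ≠ 0 := ne_of_gt hl
  exact mul_left_cancel₀ hl0 (by rw [this]; ring)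

end Aux

section Aux2
variable {A : Set V} {F : V → ℝ}

theorem fundTensor_vv (hF : IsMinkowskiConicNorm A F) {x : V} (hx : x ∈ A \ {0}) (w : V) :
    fundTensor F x x w = fderiv ℝ (Gh F) x w := by
  rw [fundTensor_eq hF hx x w]
  have hev : (fun t : ℝ => (1 + t) * fderiv ℝ (Gh F) x w) =ᶠ[𝓝 (0 : ℝ)]
      (fun t : ℝ => fderiv ℝ (Gh F) (x + t • x) w) := by
    filter_upwards [eventually_gt_nhds (show (-1 : ℝ) < 0 by norm_num)] with t ht
    have hx' : x + t • x = (1 + t) • x := by module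
    rw [hx', fderiv_homog hF hx (by linarith) w]
  rw [← hev.deriv_eq]
  have : HasDerivAt (fun t : ℝ => (1 + t) * fderiv ℝ (Gh F) x w)
      (fderiv ℝ (Gh F) x w) 0 := by
    simpa using ((hasDerivAt_id (0 : ℝ)).const_add 1).mul_const (fderiv ℝ (Gh F) x w)
  rw [this.deriv]

theorem fderiv_apply_diff (hF : IsMinkowskiConicNorm A F) {z : V} (hz : z ∈ A \ {0}) (w : V) :
    DifferentiableAt ℝ (fun y : V => fderiv ℝ (Gh F) y w) z := by
  have h1 : ContDiffAt ℝ 1 (fderiv ℝ (Gh F)) z := (GcontAt hF hz).fderiv_right le_rfl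
  exact (h1.differentiableAt one_ne_zero).clm_apply (differentiableAt_const w)

theorem psi_hasDerivAt (hF : IsMinkowskiConicNorm A F) (x w : V) (t₀ : ℝ)
    (hz : x + t₀ • w ∈ A \ {0}) :
    HasDerivAt (fun t : ℝ => fderiv ℝ (Gh F) (x + t • w) w)
      (fundTensor F (x + t₀ • w) w w) t₀ := by
  have hdiff : DifferentiableAt ℝ (fun t : ℝ => fderiv ℝ (Gh F) (x + t • w) w) t₀ :=
    (fderiv_apply_diff hF hz w).comp (g := fun y : V => fderiv ℝ (Gh F) y w) t₀ (line_hasDerivAt x w t₀).differentiableAt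
  have hfun : (fun t : ℝ => fderiv ℝ (Gh F) ((x + t₀ • w) + t • w) w)
      = (fun t : ℝ => fderiv ℝ (Gh F) (x + (t + t₀) • w) w) := by
    funext t
    have harg : (x + t₀ • w) + t • w = x + (t + t₀) • w := by module
    rw [harg]
  have hder : deriv (fun t : ℝ => fderiv ℝ (Gh F) (x + t • w) w) t₀
      = fundTensor F (x + t₀ • w) w w := by
    rw [fundTensor_eq hF hz w w, hfun,
      deriv_comp_add_const (fun t : ℝ => fderiv ℝ (Gh F) (x + t • w) w) t₀ 0, zero_add]
  exact hder ▸ hdiff.hasDerivAt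

/-- Strict convexity inequality along a segment contained in `A \ {0}`. -/
theorem star (hF : IsMinkowskiConicNorm A F) (x y : V) (hxy : y ≠ x)
    (hseg : ∀ t ∈ Icc (0 : ℝ) 1, x + t • (y - x) ∈ A \ {0}) :
    fderiv ℝ (Gh F) x (y - x) < Gh F y - Gh F x := by
  set w : V := y - x with hw
  have hw0 : w ≠ 0 := sub_ne_zero.mpr hxy
  set ψ : ℝ → ℝ := fun t => fderiv ℝ (Gh F) (x + t • w) w with hψdef
  have hψd : ∀ t ∈ Icc (0 : ℝ) 1, HasDerivAt ψ (fundTensor F (x + t • w) w w) t :=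
    fun t ht => psi_hasDerivAt hF x w t (hseg t ht)
  have hψc : ContinuousOn ψ (Icc 0 1) :=
    fun t ht => ((hψd t ht).continuousAt).continuousWithinAt
  have hmono : StrictMonoOn ψ (Icc 0 1) := by
    apply strictMonoOn_of_deriv_pos (convex_Icc 0 1) hψc
    intro t ht
    rw [interior_Icc] at ht
    have h := hψd t (Ioo_subset_Icc_self ht)
    rw [h.deriv]
    have hmem := hseg t (Ioo_subset_Icc_self ht)
    exact hF.2 _ hmem.1 (by simpa [mem_singleton_iff] using hmem.2) w hw0
  set φ : ℝ → ℝ := fun t => Gh F (x + t • w) with hφdef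
  have hφd : ∀ t ∈ Icc (0 : ℝ) 1, HasDerivAt φ (ψ t) t :=
    fun t ht => Gline_hasDerivAt hF (hseg t ht)
  obtain ⟨ξ, hξ, hslope⟩ := exists_deriv_eq_slope φ zero_lt_one
    (fun t ht => (hφd t ht).continuousAt.continuousWithinAt)
    (fun t ht => ((hφd t (Ioo_subset_Icc_self ht)).differentiableAt).differentiableWithinAt)
  have hξA : ξ ∈ Icc (0 : ℝ) 1 := Ioo_subset_Icc_self hξ
  have h2 : ψ 0 < ψ ξ := hmono (left_mem_Icc.mpr zero_le_one) hξA hξ.1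
  have h1 : ψ ξ = (φ 1 - φ 0) / (1 - 0) := by
    rw [← (hφd ξ hξA).deriv]; exact hslope
  have hψ0 : ψ 0 = fderiv ℝ (Gh F) x w := by simp [hψdef]
  have hφ0 : φ 0 = Gh F x := by simp [hφdef]
  have hφ1 : φ 1 = Gh F y := by
    show Gh F (x + (1 : ℝ) • w) = Gh F y
    have : x + (1 : ℝ) • w = y := by rw [hw]; module
    rw [this]
  rw [hψ0] at h2
  rw [hφ0, hφ1] at h1
  simp only [sub_zero, div_one] at h1
  linarith [h2, h1]
end Aux2

section Aux3
variable {A : Set V} {F : V → ℝ}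

theorem F_pos (hF : IsMinkowskiConicNorm A F) {x : V} (hx : x ∈ A) (hx0 : x ≠ 0) : 0 < F x := by
  rcases lt_or_eq_of_le (hF.1.nonneg x hx) with h | h
  · exact h
  · exact absurd (hF.1.eq_zero x hx h.symm) hx0

theorem F_zero (hF : IsMinkowskiConicNorm A F) (h0 : (0 : V) ∈ A) : F 0 = 0 := by
  have h := hF.1.homog 0 h0 2 (by norm_num)
  rw [smul_zero] at h
  linarith

/-- The fundamental inequality, in terms of `fderiv` of `Gh F`. -/
theorem fund (hF : IsMinkowskiConicNorm A F) (x y : V) (hx : x ∈ A) (hy : y ∈ A) (hx0 : x ≠ 0)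
    (hseg : ∀ t : ℝ, 0 < t → t < 1 → t • x + (1 - t) • y ∈ A) :
    fderiv ℝ (Gh F) x y ≤ F x * F y ∧
      (fderiv ℝ (Gh F) x y = F x * F y ↔ ∃ l : ℝ, 0 ≤ l ∧ y = l • x) := by
  have hxA : x ∈ A \ {0} := ⟨hx, by simpa [mem_singleton_iff] using hx0⟩
  have hFx : 0 < F x := F_pos hF hx hx0
  by_cases hcol : ∃ l : ℝ, y = l • x
  · obtain ⟨l, rfl⟩ := hcol
    have hD : fderiv ℝ (Gh F) x (l • x) = l * (F x) ^ 2 := by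
      rw [map_smul, euler hF hxA]; simp
    rcases lt_trichotomy l 0 with hl | hl | hl
    · have hDneg : fderiv ℝ (Gh F) x (l • x) < 0 := by rw [hD]; nlinarith [mul_pos hFx hFx]
      have h2 : 0 ≤ F x * F (l • x) := mul_nonneg hFx.le (hF.1.nonneg _ hy)
      refine ⟨by linarith, ?_, ?_⟩
      · intro h; exfalso; linarith
      · rintro ⟨l', hl', he⟩
        exfalso
        have hll : (l' - l) • x = 0 := by rw [sub_smul, ← he, sub_self]
        rcases smul_eq_zero.mp hll with h | h
        · have : l' = l := by linarith [sub_eq_zero.mp (by linarith [h] : l' - l = 0)]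
          linarith
        · exact hx0 h
    · subst hl
      have h00 : (0 : ℝ) • x = (0 : V) := zero_smul ℝ x
      have hF0 : F (0 : V) = 0 := F_zero hF (h00 ▸ hy)
      have hd0 : fderiv ℝ (Gh F) x ((0 : ℝ) • x) = 0 := by rw [h00]; exact map_zero _
      rw [hd0, h00, hF0, mul_zero]
      exact ⟨le_rfl, ⟨fun _ => ⟨0, le_rfl, (zero_smul ℝ x).symm⟩, fun _ => rfl⟩⟩
    · have hFy : F (l • x) = l * F x := hF.1.homog x hx l hl
      have heq : fderiv ℝ (Gh F) x (l • x) = F x * F (l • x) := by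
        rw [hD, hFy]; ring
      exact ⟨le_of_eq heq, ⟨fun _ => ⟨l, hl.le, rfl⟩, fun _ => heq⟩⟩
  · have hy0 : y ≠ 0 := fun h => hcol ⟨0, by simp [h]⟩
    have hyA : y ∈ A \ {0} := ⟨hy, by simpa [mem_singleton_iff] using hy0⟩
    have hFy : 0 < F y := F_pos hF hy hy0
    have key : ∀ s : ℝ, 0 < s →
        s * fderiv ℝ (Gh F) x y < (1 / 2) * (F y) ^ 2 + (1 / 2) * s ^ 2 * (F x) ^ 2 := by
      intro s hs
      have hsxA : s • x ∈ A \ {0} := smul_mem hF hxA hs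
      have hys : y ≠ s • x := fun h => hcol ⟨s, h⟩
      have hseg' : ∀ t ∈ Icc (0 : ℝ) 1, s • x + t • (y - s • x) ∈ A \ {0} := by
        intro t ht
        have hpeq : s • x + t • (y - s • x) = ((1 - t) * s) • x + t • y := by module
        rw [hpeq]
        have hpA : ((1 - t) * s) • x + t • y ∈ A := by
          rcases eq_or_lt_of_le ht.1 with h0 | h0
          · rw [← h0]; simpa using hsxA.1
          · rcases eq_or_lt_of_le ht.2 with h1 | h1
            · rw [h1]; simpa using hy
            · set lam := (1 - t) * s + t with hlam
              have hlam0 : 0 < lam := by nlinarith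
              set t' := (1 - t) * s / lam with ht'
              have ht'0 : 0 < t' := div_pos (by nlinarith) hlam0
              have ht'1 : t' < 1 := by rw [ht', div_lt_one hlam0]; nlinarith
              have hmem := hF.1.conic.2.2 _ (hseg t' ht'0 ht'1) lam hlam0
              have hc : lam • (t' • x + (1 - t') • y) = ((1 - t) * s) • x + t • y := by
                rw [smul_add, smul_smul, smul_smul]
                have e1 : lam * t' = (1 - t) * s := by
                  rw [ht']; field_simp
                have e2 : lam * (1 - t') = t := by
                  rw [ht']; field_simp; ring
                rw [e1, e2]
              rwa [hc] at hmem
        refine ⟨hpA, ?_⟩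
        simp only [mem_singleton_iff]
        intro hp0
        rcases eq_or_lt_of_le ht.1 with h0 | h0
        · rw [← h0] at hp0
          simp [smul_eq_zero, hx0, ne_of_gt hs] at hp0
        · have ht0 : t ≠ 0 := ne_of_gt h0
          apply hcol
          have h1 : t • y = (-((1 - t) * s)) • x := by
            rw [neg_smul]
            exact eq_neg_of_add_eq_zero_right (by rw [add_comm] at hp0; rw [add_comm]; exact hp0)
          refine ⟨t⁻¹ * (-((1 - t) * s)), ?_⟩
          calc y = t⁻¹ • (t • y) := (inv_smul_smul₀ ht0 y).symm
            _ = t⁻¹ • ((-((1 - t) * s)) • x) := by rw [h1]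
            _ = (t⁻¹ * (-((1 - t) * s))) • x := smul_smul _ _ _
      have hstar := star hF (s • x) y hys hseg'
      rw [map_sub, fderiv_homog hF hxA hs y, euler hF hsxA] at hstar
      have hFsx : F (s • x) = s * F x := hF.1.homog x hx s hs
      have hGy : Gh F y = (1 / 2) * (F y) ^ 2 := rfl
      have hGs : Gh F (s • x) = (1 / 2) * (s * F x) ^ 2 := by
        rw [show Gh F (s • x) = (1 / 2) * (F (s • x)) ^ 2 from rfl, hFsx]
      rw [hFsx, hGy, hGs] at hstar
      nlinarith [hstar]
    have hs0 : 0 < F y / F x := div_pos hFy hFx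
    have hk := key (F y / F x) hs0
    have hsx : (F y / F x) * F x = F y := div_mul_cancel₀ _ (ne_of_gt hFx)
    have hstrict : fderiv ℝ (Gh F) x y < F x * F y := by nlinarith [hk, hs0, hsx]
    refine ⟨hstrict.le, ?_, ?_⟩
    · intro h; exact absurd h (ne_of_lt hstrict)
    · rintro ⟨l, -, he⟩; exact absurd ⟨l, he⟩ hcol

end Aux3


/-- Triangle inequality and fundamental inequality for a Minkowski conic norm, for vectors
whose connecting segment lies in the conic domain. -/
theorem stmt3 {A : Set V} {F : V → ℝ} (hF : IsMinkowskiConicNorm A F)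
    (v₁ v₂ : V) (h1 : v₁ ∈ A) (h2 : v₂ ∈ A)
    (hseg : ∀ t : ℝ, 0 < t → t < 1 → t • v₁ + (1 - t) • v₂ ∈ A) :
    (F (v₁ + v₂) ≤ F v₁ + F v₂ ∧
      (F (v₁ + v₂) = F v₁ + F v₂ →
        (∃ l : ℝ, 0 ≤ l ∧ v₁ = l • v₂) ∨ (∃ l : ℝ, 0 ≤ l ∧ v₂ = l • v₁))) ∧
    (v₁ ≠ 0 →
      fundTensor F v₁ v₁ v₂ ≤ F v₁ * F v₂ ∧
      (fundTensor F v₁ v₁ v₂ = F v₁ * F v₂ ↔ ∃ l : ℝ, 0 ≤ l ∧ v₂ = l • v₁)) := by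
  have hpart_b : v₁ ≠ 0 →
      fundTensor F v₁ v₁ v₂ ≤ F v₁ * F v₂ ∧
      (fundTensor F v₁ v₁ v₂ = F v₁ * F v₂ ↔ ∃ l : ℝ, 0 ≤ l ∧ v₂ = l • v₁) := by
    intro hv10
    have hv1A : v₁ ∈ A \ {0} := ⟨h1, by simpa [mem_singleton_iff] using hv10⟩
    rw [fundTensor_vv hF hv1A v₂]
    exact fund hF v₁ v₂ h1 h2 hv10 hseg
  refine ⟨?_, hpart_b⟩
  by_cases hv10 : v₁ = 0
  · subst hv10
    have hF0 : F 0 = 0 := F_zero hF h1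
    constructor
    · simp [hF0]
    · intro _; exact Or.inl ⟨0, le_rfl, (zero_smul ℝ v₂).symm⟩
  by_cases hv20 : v₂ = 0
  · subst hv20
    have hF0 : F 0 = 0 := F_zero hF h2
    constructor
    · simp [hF0]
    · intro _; exact Or.inr ⟨0, le_rfl, (zero_smul ℝ v₁).symm⟩
  have hFv1 : 0 < F v₁ := F_pos hF h1 hv10
  have hFv2 : 0 < F v₂ := F_pos hF h2 hv20
  have hvA : v₁ + v₂ ∈ A := by
    have hhalf := hseg (1/2) (by norm_num) (by norm_num)
    have h2m := hF.1.conic.2.2 _ hhalf 2 (by norm_num)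
    have he : (2:ℝ) • ((1/2 : ℝ) • v₁ + (1 - 1/2 : ℝ) • v₂) = v₁ + v₂ := by
      norm_num
      module
    rwa [he] at h2m
  by_cases hv0 : v₁ + v₂ = 0
  · rw [hv0]
    have hF0 : F 0 = 0 := F_zero hF (hv0 ▸ hvA)
    rw [hF0]
    constructor
    · linarith
    · intro h; exfalso; linarith
  · set v := v₁ + v₂ with hv
    have hvA' : v ∈ A \ {0} := ⟨hvA, by simpa [mem_singleton_iff] using hv0⟩
    have hFv : 0 < F v := F_pos hF hvA hv0
    have hseg1 : ∀ t : ℝ, 0 < t → t < 1 → t • v + (1 - t) • v₁ ∈ A := by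
      intro t ht0 ht1
      have h1t : (0:ℝ) < 1 + t := by linarith
      have key := hF.1.conic.2.2 _ (hseg (1/(1+t)) (by positivity)
        (by rw [div_lt_one h1t]; linarith)) (1+t) h1t
      have he : ((1+t) : ℝ) • ((1/(1+t)) • v₁ + (1 - 1/(1+t)) • v₂)
          = t • v + (1 - t) • v₁ := by
        rw [smul_add, smul_smul, smul_smul, hv]
        have e1 : (1+t) * (1/(1+t)) = 1 := by field_simp
        have e2 : (1+t) * (1 - 1/(1+t)) = t := by field_simp; ring
        rw [e1, e2]
        module
      rwa [he] at key
    have hseg2 : ∀ t : ℝ, 0 < t → t < 1 → t • v + (1 - t) • v₂ ∈ A := by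
      intro t ht0 ht1
      have h1t : (0:ℝ) < 1 + t := by linarith
      have ht' : 0 < t/(1+t) := by positivity
      have ht'' : t/(1+t) < 1 := by rw [div_lt_one h1t]; linarith
      have key := hF.1.conic.2.2 _ (hseg (t/(1+t)) ht' ht'') (1+t) h1t
      have he : ((1+t) : ℝ) • ((t/(1+t)) • v₁ + (1 - t/(1+t)) • v₂)
          = t • v + (1 - t) • v₂ := by
        rw [smul_add, smul_smul, smul_smul, hv]
        have e1 : (1+t) * (t/(1+t)) = t := by field_simp
        have e2 : (1+t) * (1 - t/(1+t)) = 1 := by field_simp; ring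
        rw [e1, e2]
        module
      rwa [he] at key
    obtain ⟨hle1, hiff1⟩ := fund hF v v₁ hvA h1 hv0 hseg1
    obtain ⟨hle2, hiff2⟩ := fund hF v v₂ hvA h2 hv0 hseg2
    have hsum : fderiv ℝ (Gh F) v v₁ + fderiv ℝ (Gh F) v v₂ = (F v)^2 := by
      rw [← map_add, ← hv, euler hF hvA']
    constructor
    · nlinarith [hsum, hle1, hle2, hFv]
    · intro heq
      have he1 : fderiv ℝ (Gh F) v v₁ = F v * F v₁ :=
        le_antisymm hle1 (by nlinarith [hsum, hle2, heq])
      have he2 : fderiv ℝ (Gh F) v v₂ = F v * F v₂ :=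
        le_antisymm hle2 (by nlinarith [hsum, hle1, heq])
      obtain ⟨l₁, hl₁, hv₁⟩ := hiff1.mp he1
      obtain ⟨l₂, hl₂, hv₂⟩ := hiff2.mp he2
      have hl₁0 : l₁ ≠ 0 := by
        intro h; apply hv10; rw [hv₁, h, zero_smul]
      right
      refine ⟨l₂ / l₁, div_nonneg hl₂ hl₁, ?_⟩
      have hvv : v = l₁⁻¹ • v₁ := by
        rw [hv₁, smul_smul, inv_mul_cancel₀ hl₁0, one_smul]
      rw [hv₂, hvv, smul_smul, div_eq_mul_inv, mul_comm l₂ l₁⁻¹]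
end

section
/- Let A be a conic domain of V and B ⊆ A a subset satisfying: (a1) B is closed in A and intersects every ray D_v = {λ v : λ > 0} with v ∈ A; (a2) B is star-shaped from the origin, i.e. v ∈ B implies λ v ∈ B for all λ ∈ (0,1); (a3) the boundary S of B in A is a smooth embedded hypersurface, closed as a subset of A, such that at each v ∈ S the position vector v is not tangent to S; (a4) for each v ∈ B ∖ {0} there exists λ > 0 with v/λ ∈ S. Then the map ‖·‖_B : A → ℝ defined by ‖v‖_B = inf{λ > 0 : v/λ ∈ B} is a Minkowski conic pseudo-norm on V with domain A, and its closed unit ball {v ∈ A : ‖v‖_B ≤ 1} equals B. -/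
open Set Topology

variable {V : Type*} [NormedAddCommGroup V] [NormedSpace ℝ V] [FiniteDimensional ℝ V]

open Pointwise

section AuxiliaryLemmas

noncomputable def shearEquiv (D : V →L[ℝ] ℝ) (c : ℝ) (hc : c ≠ 0) :
    (ℝ × V) ≃L[ℝ] (ℝ × V) :=
  LinearEquiv.toContinuousLinearEquiv
    { toFun := fun p => (c * p.1 + D p.2, p.2)
      invFun := fun p => (c⁻¹ * (p.1 - D p.2), p.2)
      map_add' := by
        intro p q
        simp only [Prod.fst_add, Prod.snd_add, map_add, Prod.mk_add_mk, Prod.mk.injEq]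
        exact ⟨by ring, trivial⟩
      map_smul' := by
        intro a p
        simp only [Prod.smul_fst, Prod.smul_snd, map_smul, smul_eq_mul, RingHom.id_apply,
          Prod.smul_mk, Prod.mk.injEq]
        exact ⟨by ring, trivial⟩
      left_inv := by
        intro p
        simp only [add_sub_cancel_right]
        rw [← mul_assoc, inv_mul_cancel₀ hc, one_mul]
      right_inv := by
        intro p
        rw [Prod.mk.injEq]
        refine ⟨?_, rfl⟩
        field_simp
        ring }

@[simp] lemma shearEquiv_apply (D : V →L[ℝ] ℝ) (c : ℝ) (hc : c ≠ 0) (p : ℝ × V) :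
    shearEquiv D c hc p = (c * p.1 + D p.2, p.2) := rfl


/-- The implicit function package at a point `s` of the hypersurface `S`. -/
theorem ift_package {S : Set V} {s : V}
    {U : Set V} (hU : IsOpen U) (hsU : s ∈ U) {f : V → ℝ} (hf : ContDiff ℝ (⊤ : ℕ∞) f)
    (hfS : ∀ x ∈ U, (x ∈ S ↔ f x = 0)) (hsS : s ∈ S)
    (hDfs : fderiv ℝ f s s ≠ 0) :
    ∃ σ : V → ℝ, ContDiffAt ℝ (⊤ : ℕ∞) σ s ∧ σ s = 1 ∧
      (∀ᶠ x in 𝓝 s, 0 < σ x ∧ σ x • x ∈ S) ∧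
      ∃ r : ℝ, 0 < r ∧ ContinuousOn σ (Metric.ball s r) ∧
        ∀ t : ℝ, ∀ x : V, |t - 1| < r → dist x s < r → f (t • x) = 0 → t = σ x := by
  have hfs0 : f s = 0 := (hfS s hsU).mp hsS
  set D : V →L[ℝ] ℝ := fderiv ℝ f s with hD
  set Φ : ℝ × V → ℝ × V := fun p => (f (p.1 • p.2), p.2) with hΦdef
  have hb : IsBoundedBilinearMap ℝ fun p : ℝ × V => p.1 • p.2 := isBoundedBilinearMap_smul
  have hm : HasStrictFDerivAt (fun p : ℝ × V => p.1 • p.2) (hb.deriv (1, s)) (1, s) :=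
    hb.hasStrictFDerivAt _
  have hfD : HasStrictFDerivAt f D ((1 : ℝ) • s) := by
    rw [one_smul]
    exact hf.contDiffAt.hasStrictFDerivAt (by simp)
  have hcomp := hfD.comp (1, s) hm
  have hΦstr : HasStrictFDerivAt Φ
      ((D.comp (hb.deriv (1, s))).prod (ContinuousLinearMap.snd ℝ ℝ V)) (1, s) :=
    HasStrictFDerivAt.prodMk hcomp hasStrictFDerivAt_snd
  have hEq : (D.comp (hb.deriv (1, s))).prod (ContinuousLinearMap.snd ℝ ℝ V)
      = (shearEquiv D (D s) hDfs : (ℝ × V) →L[ℝ] (ℝ × V)) := by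
    apply ContinuousLinearMap.ext
    intro p
    simp [hb.deriv_apply, Prod.ext_iff, mul_comm]
    ring
  rw [hEq] at hΦstr
  have hΦcd : ContDiff ℝ (⊤ : ℕ∞) Φ := ContDiff.prodMk (hf.comp (contDiff_fst.smul contDiff_snd)) contDiff_snd
  set inv := hΦstr.localInverse Φ _ (1, s) with hinvdef
  set σ : V → ℝ := fun x => (inv (0, x)).1 with hσdef
  have hΦ1s : Φ (1, s) = (0, s) := by simp [hΦdef, hfs0]
  have hinv1s : inv (0, s) = (1, s) := by
    rw [← hΦ1s]; exact hΦstr.localInverse_apply_image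
  have hσs : σ s = 1 := by rw [hσdef]; simp [hinv1s]
  have hinvcd : ContDiffAt ℝ (⊤ : ℕ∞) inv (0, s) := by
    have h := ContDiffAt.to_localInverse (f' := shearEquiv D (D s) hDfs)
      hΦcd.contDiffAt hΦstr.hasFDerivAt (by simp)
    rw [hΦ1s] at h
    exact h
  have hσcd : ContDiffAt ℝ (⊤ : ℕ∞) σ s := by
    have h0 : ContDiffAt ℝ (⊤ : ℕ∞) (fun x : V => ((0 : ℝ), x)) s :=
      (ContDiff.prodMk contDiff_const contDiff_id).contDiffAt
    have h1 : ContDiffAt ℝ (⊤ : ℕ∞) (fun x : V => inv (0, x)) s := hinvcd.comp s h0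
    exact (contDiff_fst.contDiffAt.comp s h1 : )
  have hσcont : ContinuousAt σ s := hσcd.continuousAt
  -- eventual right inverse along x ↦ (0, x)
  have hright := hΦstr.eventually_right_inverse
  rw [hΦ1s] at hright
  have hmk : ContinuousAt (fun x : V => ((0 : ℝ), x)) s :=
    (continuous_const.prodMk continuous_id).continuousAt
  have hfev : ∀ᶠ x in 𝓝 s, f (σ x • x) = 0 := by
    have h2 := hmk.eventually hright
    filter_upwards [h2] with x hx
    have hsnd : (inv (0, x)).2 = x := congrArg Prod.snd hx
    have hfst : f ((inv (0, x)).1 • (inv (0, x)).2) = 0 := congrArg Prod.fst hx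
    rw [hsnd] at hfst
    exact hfst
  have hgU : ∀ᶠ x in 𝓝 s, σ x • x ∈ U := by
    have hg : ContinuousAt (fun x : V => σ x • x) s := hσcont.smul continuousAt_id
    have hval : σ s • s ∈ U := by rw [hσs, one_smul]; exact hsU
    exact hg.eventually_mem (hU.mem_nhds hval)
  have hposev : ∀ᶠ x in 𝓝 s, 0 < σ x := by
    have : ∀ᶠ y in 𝓝 (σ s), 0 < y := eventually_gt_nhds (by rw [hσs]; norm_num)
    exact hσcont.eventually this
  have hSev : ∀ᶠ x in 𝓝 s, 0 < σ x ∧ σ x • x ∈ S := by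
    filter_upwards [hfev, hgU, hposev] with x h1 h2 h3
    exact ⟨h3, (hfS _ h2).mpr h1⟩
  -- uniqueness radius
  have hleft := hΦstr.eventually_left_inverse
  rw [Metric.eventually_nhds_iff] at hleft
  obtain ⟨r₁, hr₁, huniq⟩ := hleft
  -- continuity of σ on a ball
  obtain ⟨u, hu, hcd1⟩ := hinvcd.contDiffOn (m := 1) (by simp) (by simp)
  have htmem : (fun x : V => ((0 : ℝ), x)) ⁻¹' u ∈ 𝓝 s := hmk.preimage_mem_nhds hu
  obtain ⟨r₂, hr₂, hball⟩ := Metric.mem_nhds_iff.mp htmem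
  refine ⟨σ, hσcd, hσs, hSev, min r₁ r₂, lt_min hr₁ hr₂, ?_, ?_⟩
  · have hcont : ContinuousOn inv u := hcd1.continuousOn
    have : ContinuousOn (fun x : V => inv (0, x)) (Metric.ball s (min r₁ r₂)) := by
      apply (hcont.comp (continuous_const.prodMk continuous_id).continuousOn)
      intro x hx
      exact hball (lt_of_lt_of_le (Metric.mem_ball.mp hx) (min_le_right _ _))
    exact continuous_fst.comp_continuousOn this
  · intro t x ht hx hftx
    have hp : dist ((t, x) : ℝ × V) (1, s) < r₁ := by
      rw [Prod.dist_eq]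
      refine max_lt ?_ ?_
      · rw [Real.dist_eq]; exact lt_of_lt_of_le ht (min_le_left _ _)
      · exact lt_of_lt_of_le hx (min_le_left _ _)
    have h2 := huniq hp
    have h3 : Φ (t, x) = (0, x) := by simp [hΦdef, hftx]
    rw [h3] at h2
    have := congrArg Prod.fst h2
    simpa [hσdef] using this.symm

theorem ray_escape_aux {A B S : Set V} (hAo : IsOpen A)
    (hSdef : S = A ∩ frontier B)
    {C : Set V} (hCcl : IsClosed C) (hBC : B = C ∩ A)
    (ha2 : ∀ v ∈ B, ∀ l : ℝ, 0 < l → l < 1 → l • v ∈ B)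
    {s : V} (hsS : s ∈ S)
    (σ : V → ℝ) (hσcd : ContDiffAt ℝ (⊤ : ℕ∞) σ s) (hσs : σ s = 1)
    (hSev : ∀ᶠ x in 𝓝 s, 0 < σ x ∧ σ x • x ∈ S)
    {r : ℝ} (hr : 0 < r) (hσcont : ContinuousOn σ (Metric.ball s r))
    {U : Set V} (hU : IsOpen U) (hsU : s ∈ U) {f : V → ℝ}
    (hfS : ∀ x ∈ U, (x ∈ S ↔ f x = 0))
    (huniq : ∀ t : ℝ, ∀ x : V, |t - 1| < r → dist x s < r → f (t • x) = 0 → t = σ x) :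
    ∀ t : ℝ, 1 < t → t • s ∉ B := by
  intro t₁ ht₁ ht₁B
  have hBsubC : B ⊆ C := fun y hy => (hBC ▸ hy).1
  have hclC : closure B ⊆ C := closure_minimal hBsubC hCcl
  have hSB : S ⊆ B := by
    intro x hx
    rw [hSdef] at hx
    rw [hBC]
    exact ⟨hclC (frontier_subset_closure hx.2), hx.1⟩
  have hsA : s ∈ A := (hSdef ▸ hsS).1
  have hsB : s ∈ B := hSB hsS
  have hsFr : s ∈ frontier B := (hSdef ▸ hsS).2
  have ht₁0 : (0:ℝ) < t₁ := by linarith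
  have hray : ∀ u : ℝ, 0 < u → u ≤ t₁ → u • s ∈ B := by
    intro u hu hu2
    rcases eq_or_lt_of_le hu2 with h | h
    · rw [h]; exact ht₁B
    · have h3 := ha2 _ ht₁B (u / t₁) (by positivity) (by rwa [div_lt_one ht₁0])
      rwa [smul_smul, div_mul_cancel₀ _ (ne_of_gt ht₁0)] at h3
  -- extract balls
  obtain ⟨r₀, hr₀, hSball⟩ := Metric.eventually_nhds_iff.mp hSev
  obtain ⟨rU, hrU, hUball⟩ := Metric.isOpen_iff.mp hU s hsU
  obtain ⟨rA, hrA, hAball⟩ := Metric.isOpen_iff.mp hAo s hsA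
  set r₁ : ℝ := min (min r r₀) (min rU rA) with hr₁def
  have hr₁ : 0 < r₁ := lt_min (lt_min hr hr₀) (lt_min hrU hrA)
  have hr₁r : r₁ ≤ r := le_trans (min_le_left _ _) (min_le_left _ _)
  have hr₁r₀ : r₁ ≤ r₀ := le_trans (min_le_left _ _) (min_le_right _ _)
  have hr₁U : r₁ ≤ rU := le_trans (min_le_right _ _) (min_le_left _ _)
  have hr₁A : r₁ ≤ rA := le_trans (min_le_right _ _) (min_le_right _ _)
  have hσat : ContinuousAt σ s := hσcd.continuousAt
  have hgat : ContinuousAt (fun x : V => σ x • x) s := hσat.smul continuousAt_id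
  -- δ for g-closeness
  have hgs : σ s • s = s := by rw [hσs, one_smul]
  obtain ⟨δ, hδ, hgδ⟩ := Metric.continuousAt_iff.mp hgat (r₁ / 8) (by positivity)
  rw [hgs] at hgδ
  -- m for σ-closeness
  set m : ℝ := min (min (1 - t₁⁻¹) (1 / 2)) (min (r₁ / (8 * (‖s‖ + 1))) r₁) with hmdef
  have hm : 0 < m := by
    have h1 : t₁⁻¹ < 1 := by
      rw [inv_lt_one_iff₀]; right; exact ht₁
    have h2 : (0:ℝ) < r₁ / (8 * (‖s‖ + 1)) := by positivity
    exact lt_min (lt_min (by linarith) (by norm_num)) (lt_min h2 hr₁)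
  obtain ⟨δ₂, hδ₂, hσδ₂⟩ := Metric.continuousAt_iff.mp hσat m hm
  rw [hσs] at hσδ₂
  set δ₃ : ℝ := min (min δ δ₂) r₁ with hδ₃def
  have hδ₃ : 0 < δ₃ := lt_min (lt_min hδ hδ₂) hr₁
  -- pick x₀
  have hsnotint : s ∉ interior B := hsFr.2
  have hx₀ : ∃ x₀, dist x₀ s < δ₃ ∧ x₀ ∉ B := by
    by_contra h
    push_neg at h
    apply hsnotint
    apply interior_maximal _ Metric.isOpen_ball (Metric.mem_ball_self hδ₃)
    intro x hx
    exact h x (Metric.mem_ball.mp hx)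
  obtain ⟨x₀, hx₀d, hx₀B⟩ := hx₀
  obtain ⟨c₀, hc₀def⟩ : ∃ c : ℝ, c = σ x₀ := ⟨_, rfl⟩
  have hx₀δ : dist x₀ s < δ := lt_of_lt_of_le hx₀d (le_trans (min_le_left _ _) (min_le_left _ _))
  have hx₀δ₂ : dist x₀ s < δ₂ := lt_of_lt_of_le hx₀d (le_trans (min_le_left _ _) (min_le_right _ _))
  have hx₀r₁ : dist x₀ s < r₁ := lt_of_lt_of_le hx₀d (min_le_right _ _)
  have hx₀A : x₀ ∈ A := hAball (Metric.mem_ball.mp (lt_of_lt_of_le hx₀r₁ hr₁A))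
  have hx₀S : 0 < c₀ ∧ c₀ • x₀ ∈ S := by
    rw [hc₀def]; exact hSball (lt_of_lt_of_le hx₀r₁ hr₁r₀)
  have hc₀pos : 0 < c₀ := hx₀S.1
  have hc₀m : |c₀ - 1| < m := by
    have h5 := hσδ₂ hx₀δ₂
    rw [hc₀def]
    rwa [Real.dist_eq] at h5
  have hc₀lt1 : c₀ < 1 := by
    by_contra h
    push_neg at h
    rcases eq_or_lt_of_le h with h1 | h1
    · apply hx₀B
      have h2 := hSB hx₀S.2
      rwa [← h1, one_smul] at h2
    · apply hx₀B
      have hy : c₀ • x₀ ∈ B := hSB hx₀S.2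
      have h2 := ha2 _ hy c₀⁻¹ (by positivity) ((inv_lt_one₀ hc₀pos).mpr h1)
      rwa [smul_smul, inv_mul_cancel₀ (ne_of_gt hc₀pos), one_smul] at h2
  have hc₀1 : 1 - c₀ < m := by
    rw [abs_sub_lt_iff] at hc₀m
    linarith [hc₀m.2]
  have hmt : m ≤ 1 - t₁⁻¹ := le_trans (min_le_left _ _) (min_le_left _ _)
  have hmhalf : m ≤ 1 / 2 := le_trans (min_le_left _ _) (min_le_right _ _)
  have hmr : m ≤ r₁ / (8 * (‖s‖ + 1)) := le_trans (min_le_right _ _) (min_le_left _ _)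
  have hmr₁ : m ≤ r₁ := le_trans (min_le_right _ _) (min_le_right _ _)
  have hc₀half : 1 / 2 < c₀ := by linarith [lt_of_lt_of_le hc₀1 hmhalf]
  have hc₀t : t₁⁻¹ < c₀ := by linarith [lt_of_lt_of_le hc₀1 hmt]
  have hc₀invlt : c₀⁻¹ < t₁ := (inv_lt_comm₀ hc₀pos ht₁0).mpr hc₀t
  -- the path
  set z : ℝ → V := fun p => x₀ + p • (s - x₀) with hzdef
  set γ : ℝ → V := fun p => c₀⁻¹ • (σ (z p) • z p) with hγdef
  have hδ₃δ : δ₃ ≤ δ := le_trans (min_le_left _ _) (min_le_left _ _)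
  have hδ₃δ₂ : δ₃ ≤ δ₂ := le_trans (min_le_left _ _) (min_le_right _ _)
  have hδ₃r₁ : δ₃ ≤ r₁ := min_le_right _ _
  have hzball : ∀ p ∈ Icc (0:ℝ) 1, dist (z p) s < δ₃ := by
    intro p hp
    have h1 : z p - s = (1 - p) • (x₀ - s) := by
      simp only [hzdef]
      module
    have h2 : dist (z p) s ≤ dist x₀ s := by
      rw [dist_eq_norm, h1, norm_smul, dist_eq_norm]
      have h3 : ‖(1:ℝ) - p‖ ≤ 1 := by
        rw [Real.norm_eq_abs, abs_le]
        exact ⟨by linarith [hp.2], by linarith [hp.1]⟩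
      calc ‖(1:ℝ) - p‖ * ‖x₀ - s‖ ≤ 1 * ‖x₀ - s‖ :=
            mul_le_mul_of_nonneg_right h3 (norm_nonneg _)
        _ = ‖x₀ - s‖ := one_mul _
    exact lt_of_le_of_lt h2 hx₀d
  have hw : ∀ p ∈ Icc (0:ℝ) 1, 0 < σ (z p) ∧ σ (z p) • z p ∈ S := fun p hp =>
    hSball (lt_of_lt_of_le (hzball p hp) (le_trans hδ₃r₁ hr₁r₀))
  have hwdist : ∀ p ∈ Icc (0:ℝ) 1, dist (σ (z p) • z p) s < r₁ / 8 := fun p hp =>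
    hgδ (lt_of_lt_of_le (hzball p hp) hδ₃δ)
  have h2inv : c₀⁻¹ < 2 := by
    have h9 := (inv_lt_comm₀ hc₀pos (by norm_num : (0:ℝ) < 2)).mpr
    apply h9
    rw [show (2:ℝ)⁻¹ = 1/2 by norm_num]
    exact hc₀half
  have hc₀inv1 : 1 < c₀⁻¹ := (one_lt_inv₀ hc₀pos).mpr hc₀lt1
  have hγdist : ∀ p ∈ Icc (0:ℝ) 1, dist (γ p) s < r₁ / 2 := by
    intro p hp
    have hys : γ p - s = c₀⁻¹ • (σ (z p) • z p - s) + (c₀⁻¹ - 1) • s := by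
      simp only [hγdef]
      module
    have h6 : c₀⁻¹ - 1 < 2 * (1 - c₀) := by
      have h61 : c₀⁻¹ - 1 = (1 - c₀) / c₀ := by field_simp
      have h62 : (1 - c₀) / c₀ = (1 - c₀) * c₀⁻¹ := div_eq_mul_inv _ _
      have h63 : (1 - c₀) * c₀⁻¹ < (1 - c₀) * 2 :=
        mul_lt_mul_of_pos_left h2inv (by linarith)
      rw [h61, h62]
      linarith
    have h7 : 1 - c₀ < r₁ / (8 * (‖s‖ + 1)) := lt_of_lt_of_le hc₀1 hmr
    have hp1 : (0:ℝ) < ‖s‖ + 1 := by positivity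
    have h8 : (1 - c₀) * (‖s‖ + 1) < r₁ / 8 := by
      have h71 : r₁ / (8 * (‖s‖ + 1)) = (r₁ / 8) / (‖s‖ + 1) := (div_div r₁ 8 (‖s‖ + 1)).symm
      rw [h71, lt_div_iff₀ hp1] at h7
      exact h7
    have hkey : (c₀⁻¹ - 1) * ‖s‖ < r₁ / 4 := by
      have e1 : (c₀⁻¹ - 1) * ‖s‖ ≤ 2 * (1 - c₀) * ‖s‖ :=
        mul_le_mul_of_nonneg_right h6.le (norm_nonneg s)
      have e2 : 2 * (1 - c₀) * ‖s‖ ≤ 2 * (1 - c₀) * (‖s‖ + 1) :=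
        mul_le_mul_of_nonneg_left (by linarith [norm_nonneg s]) (by linarith)
      have e3 : 2 * (1 - c₀) * (‖s‖ + 1) = 2 * ((1 - c₀) * (‖s‖ + 1)) := by ring
      linarith
    rw [dist_eq_norm, hys]
    have ha0 : (0:ℝ) ≤ ‖σ (z p) • z p - s‖ := norm_nonneg _
    have ha1 : ‖σ (z p) • z p - s‖ < r₁ / 8 := by
      rw [← dist_eq_norm]; exact hwdist p hp
    calc ‖c₀⁻¹ • (σ (z p) • z p - s) + (c₀⁻¹ - 1) • s‖
        ≤ ‖c₀⁻¹ • (σ (z p) • z p - s)‖ + ‖(c₀⁻¹ - 1) • s‖ := norm_add_le _ _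
      _ = c₀⁻¹ * ‖σ (z p) • z p - s‖ + (c₀⁻¹ - 1) * ‖s‖ := by
          rw [norm_smul, norm_smul, Real.norm_eq_abs, Real.norm_eq_abs,
            abs_of_pos (by positivity), abs_of_nonneg (by linarith)]
      _ < r₁ / 2 := by
          have e4 : c₀⁻¹ * ‖σ (z p) • z p - s‖ ≤ 2 * ‖σ (z p) • z p - s‖ :=
            mul_le_mul_of_nonneg_right h2inv.le ha0
          linarith
  have hγr₁ : ∀ p ∈ Icc (0:ℝ) 1, dist (γ p) s < r₁ := fun p hp =>
    lt_of_lt_of_le (hγdist p hp) (by linarith)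
  have hγA : ∀ p ∈ Icc (0:ℝ) 1, γ p ∈ A := fun p hp =>
    hAball (Metric.mem_ball.mpr (lt_of_lt_of_le (hγr₁ p hp) hr₁A))
  have hγU : ∀ p ∈ Icc (0:ℝ) 1, γ p ∈ U := fun p hp =>
    hUball (Metric.mem_ball.mpr (lt_of_lt_of_le (hγr₁ p hp) hr₁U))
  have hγrr : ∀ p ∈ Icc (0:ℝ) 1, dist (γ p) s < r := fun p hp =>
    lt_of_lt_of_le (hγr₁ p hp) hr₁r
  have hγnotS : ∀ p ∈ Icc (0:ℝ) 1, γ p ∉ S := by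
    intro p hp hin
    have hfγ : f ((1:ℝ) • γ p) = 0 := by
      rw [one_smul]; exact (hfS _ (hγU p hp)).mp hin
    have h1 : (1:ℝ) = σ (γ p) :=
      huniq 1 (γ p) (by simpa using hr) (hγrr p hp) hfγ
    have hc₀γ : c₀ • γ p = σ (z p) • z p := by
      simp only [hγdef]
      rw [smul_smul, mul_inv_cancel₀ (ne_of_gt hc₀pos), one_smul]
    have hwU : σ (z p) • z p ∈ U := by
      apply hUball
      exact Metric.mem_ball.mpr (lt_of_lt_of_le (hwdist p hp) (by linarith))
    have hfw : f (c₀ • γ p) = 0 := by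
      rw [hc₀γ]; exact (hfS _ hwU).mp (hw p hp).2
    have h2 : c₀ = σ (γ p) :=
      huniq c₀ (γ p) (lt_of_lt_of_le hc₀m (le_trans hmr₁ hr₁r)) (hγrr p hp) hfw
    rw [← h1] at h2
    exact absurd h2 (ne_of_lt hc₀lt1)
  have hz0 : z 0 = x₀ := by simp [hzdef]
  have hz1 : z 1 = s := by simp [hzdef]
  have hγ0 : γ 0 = x₀ := by
    simp only [hγdef, hz0, ← hc₀def]
    rw [smul_smul, inv_mul_cancel₀ (ne_of_gt hc₀pos), one_smul]
  have hγ1 : γ 1 = c₀⁻¹ • s := by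
    simp only [hγdef, hz1, hσs, one_smul]
  have hγ1B : γ 1 ∈ B := by
    rw [hγ1]; exact hray c₀⁻¹ (by positivity) (le_of_lt hc₀invlt)
  have hγ0ncl : x₀ ∉ closure B := by
    intro h
    exact hx₀B (by rw [hBC]; exact ⟨hclC h, hx₀A⟩)
  -- continuity of the path
  have hzc : Continuous z := by
    simp only [hzdef]
    exact continuous_const.add (continuous_id.smul continuous_const)
  have hmaps : MapsTo z (Icc (0:ℝ) 1) (Metric.ball s r) := fun p hp =>
    Metric.mem_ball.mpr (lt_of_lt_of_le (hzball p hp) (le_trans hδ₃r₁ hr₁r))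
  have hσzc : ContinuousOn (fun p => σ (z p)) (Icc (0:ℝ) 1) :=
    hσcont.comp hzc.continuousOn hmaps
  have hγc : ContinuousOn γ (Icc (0:ℝ) 1) := by
    simp only [hγdef]
    exact (hσzc.smul hzc.continuousOn).const_smul _
  -- connectedness contradiction
  have hKcover : ∀ p ∈ Icc (0:ℝ) 1, γ p ∈ interior B ∪ (closure B)ᶜ := by
    intro p hp
    by_cases h1 : γ p ∈ closure B
    · left
      by_contra h2
      exact hγnotS p hp (by rw [hSdef]; exact ⟨hγA p hp, h1, h2⟩)
    · right; exact h1
  have h1mem : (1:ℝ) ∈ Icc (0:ℝ) 1 := by norm_num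
  have h0mem : (0:ℝ) ∈ Icc (0:ℝ) 1 := by norm_num
  have hγ1i : γ 1 ∈ interior B := by
    rcases hKcover 1 h1mem with h | h
    · exact h
    · exact absurd (subset_closure hγ1B) h
  have hK := (isPreconnected_Icc.image γ hγc) (interior B) (closure B)ᶜ
    isOpen_interior isClosed_closure.isOpen_compl
    (by rintro y ⟨p, hp, rfl⟩; exact hKcover p hp)
    ⟨γ 1, ⟨1, h1mem, rfl⟩, hγ1i⟩
    ⟨γ 0, ⟨0, h0mem, rfl⟩, by rw [hγ0]; exact hγ0ncl⟩
  obtain ⟨y, _, hy2, hy3⟩ := hK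
  exact hy3 (subset_closure (interior_subset hy2))

end AuxiliaryLemmas

/-- Reconstruction of a Minkowski conic pseudo-norm from a candidate closed unit ball `B`
satisfying conditions (a1)–(a4); its closed unit ball is exactly `B`.
Here `S` is the boundary of `B` in `A`, and (a3) is expressed by local smooth defining
functions with nonvanishing differential which is also nonzero on the position vector. -/
theorem stmt5 {A : Set V} (hA : IsConicDomain A) (B : Set V) (hBA : B ⊆ A)
    (S : Set V) (hSdef : S = A ∩ frontier B)
    -- (a1): B is closed in A and meets every ray of A
    (ha1 : (∃ C : Set V, IsClosed C ∧ B = C ∩ A) ∧ ∀ v ∈ A, ∃ l : ℝ, 0 < l ∧ l • v ∈ B)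
    -- (a2): B is star-shaped from the origin
    (ha2 : ∀ v ∈ B, ∀ l : ℝ, 0 < l → l < 1 → l • v ∈ B)
    -- (a3): S is a smooth embedded hypersurface, with the position vector transverse
    (ha3 : ∀ v ∈ S, ∃ U : Set V, IsOpen U ∧ v ∈ U ∧ ∃ f : V → ℝ, ContDiff ℝ (⊤ : ℕ∞) f ∧
      (∀ x ∈ U, (x ∈ S ↔ f x = 0)) ∧ (∀ x ∈ U, fderiv ℝ f x ≠ 0) ∧ fderiv ℝ f v v ≠ 0)
    -- (a4): every nonzero v in B lies on a ray through S
    (ha4 : ∀ v ∈ B, v ≠ 0 → ∃ l : ℝ, 0 < l ∧ l⁻¹ • v ∈ S) :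
    IsMinkowskiConicPseudoNorm A (fun v => sInf {l : ℝ | 0 < l ∧ l⁻¹ • v ∈ B}) ∧
    {v : V | v ∈ A ∧ sInf {l : ℝ | 0 < l ∧ l⁻¹ • v ∈ B} ≤ 1} = B := by
  classical
  obtain ⟨hAne, hAo, hAcone⟩ := hA
  obtain ⟨⟨C, hCcl, hBC⟩, hmeet⟩ := ha1
  set F : V → ℝ := fun v => sInf {l : ℝ | 0 < l ∧ l⁻¹ • v ∈ B} with hFdef
  have hbdd : ∀ v : V, BddBelow {l : ℝ | 0 < l ∧ l⁻¹ • v ∈ B} := fun v =>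
    ⟨0, fun l hl => hl.1.le⟩
  have hne : ∀ v ∈ A, ({l : ℝ | 0 < l ∧ l⁻¹ • v ∈ B}).Nonempty := by
    intro v hv
    obtain ⟨l, hl, hlB⟩ := hmeet v hv
    exact ⟨l⁻¹, inv_pos.mpr hl, by rwa [inv_inv]⟩
  have hFnonneg : ∀ v : V, 0 ≤ F v := fun v =>
    Real.sInf_nonneg (fun l hl => hl.1.le)
  have hFle1 : ∀ v ∈ B, F v ≤ 1 := fun v hv =>
    csInf_le (hbdd v) ⟨one_pos, by rw [inv_one, one_smul]; exact hv⟩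
  have hBsubC : B ⊆ C := fun y hy => (hBC ▸ hy).1
  have hclC : closure B ⊆ C := closure_minimal hBsubC hCcl
  have hSB : S ⊆ B := by
    intro x hx
    rw [hSdef] at hx
    rw [hBC]
    exact ⟨hclC (frontier_subset_closure hx.2), hx.1⟩
  have hstar : ∀ v ∈ B, ∀ l : ℝ, 0 < l → l ≤ 1 → l • v ∈ B := by
    intro v hv l hl hl1
    rcases eq_or_lt_of_le hl1 with h | h
    · rw [h, one_smul]; exact hv
    · exact ha2 v hv l hl h
  have hball : ∀ v ∈ A, F v ≤ 1 → v ∈ B := by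
    intro v hv hF1
    have hmem : ∀ ε : ℝ, 0 < ε → (1 + ε)⁻¹ • v ∈ B := by
      intro ε hε
      have hlt : F v < 1 + ε := lt_of_le_of_lt hF1 (by linarith)
      obtain ⟨l, hlM, hllt⟩ := exists_lt_of_csInf_lt (hne v hv) hlt
      have h1 : (1 + ε)⁻¹ • v = ((1 + ε)⁻¹ * l) • (l⁻¹ • v) := by
        rw [smul_smul, mul_assoc, mul_inv_cancel₀ (ne_of_gt hlM.1), mul_one]
      rw [h1]
      apply hstar _ hlM.2 _ (mul_pos (inv_pos.mpr (by linarith)) hlM.1)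
      rw [inv_mul_le_iff₀ (by linarith : (0:ℝ) < 1 + ε), mul_one]
      exact hllt.le
    have hcl : v ∈ closure B := by
      rw [Metric.mem_closure_iff]
      intro ε hε
      set δ : ℝ := ε / (2 * (‖v‖ + 1)) with hδdef
      have hδpos : 0 < δ := by positivity
      refine ⟨(1 + δ)⁻¹ • v, hmem δ hδpos, ?_⟩
      have h2 : v - (1 + δ)⁻¹ • v = (1 - (1 + δ)⁻¹) • v := by module
      rw [dist_eq_norm, h2, norm_smul, Real.norm_eq_abs]
      have h3 : (1 + δ)⁻¹ ≤ 1 := by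
        rw [inv_le_one_iff₀]; right; linarith
      have hn1 : (0:ℝ) < 1 + δ := by linarith
      have h4 : 1 - (1 + δ)⁻¹ = δ / (1 + δ) := by field_simp; ring
      have hn2 : ‖v‖ + 1 ≠ 0 := by positivity
      calc |1 - (1 + δ)⁻¹| * ‖v‖ = δ / (1 + δ) * ‖v‖ := by
            rw [h4, abs_of_nonneg (by positivity)]
        _ ≤ δ * ‖v‖ :=
            mul_le_mul_of_nonneg_right (div_le_self hδpos.le (by linarith)) (norm_nonneg v)
        _ ≤ δ * (‖v‖ + 1) := mul_le_mul_of_nonneg_left (by linarith) hδpos.le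
        _ = ε / 2 := by rw [hδdef]; field_simp
        _ < ε := by linarith
    rw [hBC]
    exact ⟨hclC hcl, hv⟩
  have hhomog : ∀ v ∈ A, ∀ l : ℝ, 0 < l → F (l • v) = l * F v := by
    intro v hv l hl
    have hl0 : l ≠ 0 := ne_of_gt hl
    have hset : {m : ℝ | 0 < m ∧ m⁻¹ • (l • v) ∈ B} = l • {m : ℝ | 0 < m ∧ m⁻¹ • v ∈ B} := by
      ext m
      simp only [Set.mem_smul_set, Set.mem_setOf_eq, smul_eq_mul]
      constructor
      · rintro ⟨hm, hmB⟩
        refine ⟨l⁻¹ * m, ⟨by positivity, ?_⟩, by field_simp⟩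
        have he : (l⁻¹ * m)⁻¹ • v = m⁻¹ • (l • v) := by
          rw [smul_smul, mul_inv, inv_inv, mul_comm]
        rwa [he]
      · rintro ⟨a, ⟨ha, haB⟩, rfl⟩
        refine ⟨by positivity, ?_⟩
        have he : (l * a)⁻¹ • (l • v) = a⁻¹ • v := by
          rw [smul_smul, mul_inv, mul_comm l⁻¹ a⁻¹, mul_assoc, inv_mul_cancel₀ hl0, mul_one]
        rwa [he]
    show sInf {m : ℝ | 0 < m ∧ m⁻¹ • (l • v) ∈ B} = l * sInf {m : ℝ | 0 < m ∧ m⁻¹ • v ∈ B}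
    rw [hset, Real.sInf_smul_of_nonneg hl.le, smul_eq_mul]
  have hesc : ∀ s ∈ S, ∀ t : ℝ, 1 < t → t • s ∉ B := by
    intro s hsS t ht
    obtain ⟨U, hU, hsU, f, hf, hfS, _hDf, hDfs⟩ := ha3 s hsS
    obtain ⟨σ, hσcd, hσs, hSev, r, hrpos, hσcont, huniq⟩ :=
      ift_package hU hsU hf hfS hsS hDfs
    exact ray_escape_aux hAo hSdef hCcl hBC ha2 hsS σ hσcd hσs hSev hrpos hσcont
      hU hsU hfS huniq t ht
  have hFS1 : ∀ s ∈ S, F s = 1 := by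
    intro s hsS
    have hsB : s ∈ B := hSB hsS
    refine le_antisymm (hFle1 s hsB) ?_
    refine le_csInf (hne s (hBA hsB)) ?_
    intro l hl
    by_contra h
    push_neg at h
    exact hesc s hsS l⁻¹ ((one_lt_inv₀ hl.1).mpr h) hl.2
  have hpos : ∀ v ∈ A, v ≠ 0 → 0 < F v := by
    intro v hv hv0
    by_cases hvB : v ∈ B
    · obtain ⟨l, hl, hlS⟩ := ha4 v hvB hv0
      have h1 : F (l⁻¹ • v) = 1 := hFS1 _ hlS
      rw [hhomog v hv l⁻¹ (inv_pos.mpr hl)] at h1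
      have h2 : F v = l := by
        field_simp at h1
        linarith
      rw [h2]; exact hl
    · by_contra h
      push_neg at h
      have h0 : F v = 0 := le_antisymm h (hFnonneg v)
      exact hvB (hball v hv (by rw [h0]; norm_num))
  have hS1 : ∀ v ∈ A, F v = 1 → v ∈ S := by
    intro v hv hF1
    have hvB : v ∈ B := hball v hv hF1.le
    have hv0 : v ≠ 0 := by
      intro h0
      have h2 := hhomog v hv 2 (by norm_num)
      rw [h0, smul_zero] at h2
      rw [h0] at hF1
      rw [hF1] at h2
      norm_num at h2
    have hnint : v ∉ interior B := by
      intro hint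
      obtain ⟨ε, hε, hball2⟩ := Metric.isOpen_iff.mp isOpen_interior v hint
      set δ : ℝ := ε / (2 * (‖v‖ + 1)) with hδdef
      have hδpos : 0 < δ := by positivity
      have hdist : dist ((1 + δ) • v) v < ε := by
        have h2 : (1 + δ) • v - v = δ • v := by module
        rw [dist_eq_norm, h2, norm_smul, Real.norm_eq_abs, abs_of_pos hδpos]
        calc δ * ‖v‖ ≤ δ * (‖v‖ + 1) := mul_le_mul_of_nonneg_left (by linarith) hδpos.le
          _ = ε / 2 := by rw [hδdef]; field_simp
          _ < ε := by linarith
      have hmem : (1 + δ) • v ∈ B := interior_subset (hball2 (Metric.mem_ball.mpr hdist))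
      have h3 := hFle1 _ hmem
      rw [hhomog v hv (1 + δ) (by linarith), hF1, mul_one] at h3
      linarith
    rw [hSdef]
    exact ⟨hv, subset_closure hvB, hnint⟩
  have hsmooth : ContDiffOn ℝ (⊤ : ℕ∞) F (A \ {0}) := by
    intro v hv
    apply ContDiffAt.contDiffWithinAt
    obtain ⟨hvA, hv0'⟩ := hv
    have hv0 : v ≠ 0 := hv0'
    have hc : 0 < F v := hpos v hvA hv0
    have hcne : F v ≠ 0 := ne_of_gt hc
    have hsA2 : (F v)⁻¹ • v ∈ A := hAcone v hvA (F v)⁻¹ (inv_pos.mpr hc)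
    have hsF : F ((F v)⁻¹ • v) = 1 := by
      rw [hhomog v hvA (F v)⁻¹ (inv_pos.mpr hc), inv_mul_cancel₀ hcne]
    have hsS2 : (F v)⁻¹ • v ∈ S := hS1 _ hsA2 hsF
    obtain ⟨U, hU, hsU, f, hf, hfS, _hDf, hDfs⟩ := ha3 _ hsS2
    obtain ⟨σ, hσcd, hσs, hSev, r, hrpos, hσcont, huniq⟩ :=
      ift_package hU hsU hf hfS hsS2 hDfs
    have hFloc : ∀ᶠ x in 𝓝 ((F v)⁻¹ • v), F x = (σ x)⁻¹ := by
      filter_upwards [hSev, hAo.eventually_mem hsA2] with x hx hxA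
      have hyF : F (σ x • x) = 1 := hFS1 _ hx.2
      rw [hhomog x hxA (σ x) hx.1] at hyF
      have hσne : σ x ≠ 0 := ne_of_gt hx.1
      field_simp at hyF ⊢
      linarith
    have htend : Filter.Tendsto (fun x : V => (F v)⁻¹ • x) (𝓝 v) (𝓝 ((F v)⁻¹ • v)) :=
      ((continuous_const_smul ((F v)⁻¹ : ℝ)).tendsto v : )
    have hEq : (fun x => F v * (σ ((F v)⁻¹ • x))⁻¹) =ᶠ[𝓝 v] F := by
      filter_upwards [htend.eventually hFloc, hAo.eventually_mem hvA] with x h1 hxA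
      have h2 : F ((F v)⁻¹ • x) = (F v)⁻¹ * F x := hhomog x hxA (F v)⁻¹ (inv_pos.mpr hc)
      rw [h1] at h2
      rw [h2, ← mul_assoc, mul_inv_cancel₀ hcne, one_mul]
    refine ContDiffAt.congr_of_eventuallyEq ?_ hEq.symm
    have h1 : ContDiffAt ℝ (⊤ : ℕ∞) (fun x : V => (F v)⁻¹ • x) v :=
      (contDiff_id.const_smul ((F v)⁻¹ : ℝ)).contDiffAt
    have h3 : ContDiffAt ℝ (⊤ : ℕ∞) (fun x : V => σ ((F v)⁻¹ • x)) v := hσcd.comp v h1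
    have h4 : ContDiffAt ℝ (⊤ : ℕ∞) (fun x : V => (σ ((F v)⁻¹ • x))⁻¹) v := by
      apply h3.inv
      show σ ((F v)⁻¹ • v) ≠ 0
      rw [hσs]; norm_num
    exact contDiffAt_const.mul h4
  constructor
  · exact ⟨⟨hAne, hAo, hAcone⟩, fun v _ => hFnonneg v,
      fun v hv h => by by_contra hv0; exact absurd h (ne_of_gt (hpos v hv hv0)),
      hhomog, hsmooth⟩
  · ext v
    constructor
    · rintro ⟨hv, h1⟩
      exact hball v hv h1
    · intro hv
      exact ⟨hBA hv, hFle1 v hv⟩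
end

section
/- Let F : V → ℝ be a Minkowski pseudo-norm. Then the collection of forward affine open balls {B⁺_v(r) : v ∈ V, r > 0} is a basis for the natural topology of V, and likewise the collection of backward affine open balls {B⁻_v(r) : v ∈ V, r > 0}. -/
open Set Topology

variable {V : Type*} [NormedAddCommGroup V] [NormedSpace ℝ V] [FiniteDimensional ℝ V]

lemma aux_F0 (F : V → ℝ) (hF : IsMinkowskiConicPseudoNorm (Set.univ : Set V) F) : F 0 = 0 := by
  have h := hF.homog 0 (mem_univ _) 2 (by norm_num)
  simp only [smul_zero] at h
  linarith

lemma aux_contOn (F : V → ℝ) (hF : IsMinkowskiConicPseudoNorm (Set.univ : Set V) F) :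
    ContinuousOn F ({0}ᶜ : Set V) := by
  have := hF.smooth.continuousOn
  simpa [Set.diff_eq, Set.univ_inter] using this

lemma aux_bounds (F : V → ℝ) (hF : IsMinkowskiConicPseudoNorm (Set.univ : Set V) F) :
    ∃ c C : ℝ, 0 < c ∧ (∀ x : V, c * ‖x‖ ≤ F x) ∧ (∀ x : V, F x ≤ C * ‖x‖) := by
  rcases subsingleton_or_nontrivial V with h | h
  · refine ⟨1, 1, one_pos, fun x => ?_, fun x => ?_⟩ <;>
    · have : x = 0 := Subsingleton.elim x 0
      simp [this, aux_F0 F hF]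
  · have hsph : IsCompact (Metric.sphere (0:V) 1) := isCompact_sphere 0 1
    have hne : (Metric.sphere (0:V) 1).Nonempty := NormedSpace.sphere_nonempty.2 zero_le_one
    have hsub : Metric.sphere (0:V) 1 ⊆ ({0}ᶜ : Set V) := by
      intro x hx; simp at hx ⊢; intro h0; rw [h0] at hx; simp at hx
    have hcont : ContinuousOn F (Metric.sphere (0:V) 1) :=
      (aux_contOn F hF).mono hsub
    obtain ⟨x0, hx0, hmin⟩ := hsph.exists_isMinOn hne hcont
    obtain ⟨x1, hx1, hmax⟩ := hsph.exists_isMaxOn hne hcont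
    have hx0ne : x0 ≠ 0 := by intro h0; rw [h0] at hx0; simp at hx0
    have hc : 0 < F x0 := by
      rcases lt_or_eq_of_le (hF.nonneg x0 (mem_univ _)) with h | h
      · exact h
      · exact absurd (hF.eq_zero x0 (mem_univ _) h.symm) hx0ne
    refine ⟨F x0, F x1, hc, fun x => ?_, fun x => ?_⟩
    · rcases eq_or_ne x 0 with rfl | hx
      · simp [aux_F0 F hF]
      · have hn : 0 < ‖x‖ := norm_pos_iff.2 hx
        set u := ‖x‖⁻¹ • x with hu
        have husph : u ∈ Metric.sphere (0:V) 1 := by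
          simp [hu, norm_smul, abs_of_pos (inv_pos.2 hn), inv_mul_cancel₀ hn.ne']
        have hxu : x = ‖x‖ • u := by
          rw [hu, smul_smul, mul_inv_cancel₀ hn.ne', one_smul]
        have : F x = ‖x‖ * F u := by
          conv_lhs => rw [hxu]
          exact hF.homog u (mem_univ _) ‖x‖ hn
        rw [this, mul_comm (F x0)]
        exact mul_le_mul_of_nonneg_left (hmin husph) hn.le
    · rcases eq_or_ne x 0 with rfl | hx
      · simp [aux_F0 F hF]
      · have hn : 0 < ‖x‖ := norm_pos_iff.2 hx
        set u := ‖x‖⁻¹ • x with hu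
        have husph : u ∈ Metric.sphere (0:V) 1 := by
          simp [hu, norm_smul, abs_of_pos (inv_pos.2 hn), inv_mul_cancel₀ hn.ne']
        have hxu : x = ‖x‖ • u := by
          rw [hu, smul_smul, mul_inv_cancel₀ hn.ne', one_smul]
        have : F x = ‖x‖ * F u := by
          conv_lhs => rw [hxu]
          exact hF.homog u (mem_univ _) ‖x‖ hn
        rw [this, mul_comm]
        exact mul_le_mul_of_nonneg_right (hmax husph) hn.le

lemma aux_cont (F : V → ℝ) (hF : IsMinkowskiConicPseudoNorm (Set.univ : Set V) F) :
    Continuous F := by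
  obtain ⟨c, C, hc, hlow, hup⟩ := aux_bounds F hF
  rw [continuous_iff_continuousAt]
  intro x
  rcases eq_or_ne x 0 with rfl | hx
  · rw [ContinuousAt, aux_F0 F hF]
    have hg : Filter.Tendsto (fun y : V => C * ‖y‖) (nhds 0) (nhds 0) := by
      have : Filter.Tendsto (fun y : V => ‖y‖) (nhds 0) (nhds 0) := by
        simpa using (continuous_norm (E := V)).tendsto 0
      simpa using this.const_mul C
    exact squeeze_zero (fun y => hF.nonneg y (mem_univ _)) (fun y => hup y) hg
  · exact (aux_contOn F hF).continuousAt (isOpen_compl_singleton.mem_nhds hx)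

/-- For a Minkowski pseudo-norm (conic domain all of `V`), the forward affine open balls
form a basis of the natural topology of `V`, and so do the backward ones. -/
theorem stmt7 (F : V → ℝ) (hF : IsMinkowskiConicPseudoNorm (Set.univ : Set V) F) :
    TopologicalSpace.IsTopologicalBasis
      {S : Set V | ∃ (v : V) (r : ℝ), 0 < r ∧ S = {x : V | F (x - v) < r}} ∧
    TopologicalSpace.IsTopologicalBasis
      {S : Set V | ∃ (v : V) (r : ℝ), 0 < r ∧ S = {x : V | F (v - x) < r}} := by
  obtain ⟨c, C, hc, hlow, -⟩ := aux_bounds F hF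
  have hcont := aux_cont F hF
  have hF0 := aux_F0 F hF
  constructor
  · apply TopologicalSpace.isTopologicalBasis_of_isOpen_of_nhds
    · rintro S ⟨v, r, hr, rfl⟩
      exact isOpen_lt (hcont.comp (continuous_id.sub continuous_const)) continuous_const
    · intro x u hxu hu
      obtain ⟨ε, hε, hball⟩ := Metric.isOpen_iff.1 hu x hxu
      refine ⟨{y | F (y - x) < c * ε}, ⟨x, c * ε, by positivity, rfl⟩, ?_, ?_⟩
      · simp only [Set.mem_setOf_eq, sub_self, hF0]
        positivity
      · intro y hy
        apply hball
        rw [Metric.mem_ball, dist_eq_norm]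
        have h1 := hlow (y - x)
        have hy' : F (y - x) < c * ε := hy
        exact (mul_lt_mul_iff_right₀ hc).1 (lt_of_le_of_lt h1 hy')
  · apply TopologicalSpace.isTopologicalBasis_of_isOpen_of_nhds
    · rintro S ⟨v, r, hr, rfl⟩
      exact isOpen_lt (hcont.comp (continuous_const.sub continuous_id)) continuous_const
    · intro x u hxu hu
      obtain ⟨ε, hε, hball⟩ := Metric.isOpen_iff.1 hu x hxu
      refine ⟨{y | F (x - y) < c * ε}, ⟨x, c * ε, by positivity, rfl⟩, ?_, ?_⟩
      · simp only [Set.mem_setOf_eq, sub_self, hF0]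
        positivity
      · intro y hy
        apply hball
        rw [Metric.mem_ball, dist_eq_norm, ← norm_neg, neg_sub]
        have h1 := hlow (x - y)
        have hy' : F (x - y) < c * ε := hy
        exact (mul_lt_mul_iff_right₀ hc).1 (lt_of_le_of_lt h1 hy')
end

section
/- Let F : V → ℝ be a Minkowski pseudo-norm with fundamental tensor g. If F is not a Minkowski norm, i.e. there exists v ≠ 0 at which g_v is not positive definite, then g is degenerate at some direction: there exist v₁ ∈ V ∖ {0} and w ∈ V ∖ {0} such that g_{v₁}(w, u) = 0 for every u ∈ V. -/
set_option linter.unusedSectionVars false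
set_option linter.deprecated false


open Set Topology

variable {V : Type*} [NormedAddCommGroup V] [NormedSpace ℝ V] [FiniteDimensional ℝ V]

section Aux
variable {U : Set V} {f : V → ℝ}

lemma aux_line (hU : IsOpen U) (hf : ContDiffOn ℝ (⊤ : ℕ∞) f U) {v u : V} {t : ℝ}
    (ht : v + t • u ∈ U) :
    HasDerivAt (fun s : ℝ => f (v + s • u)) (fderiv ℝ f (v + t • u) u) t := by
  have hdiff : DifferentiableAt ℝ f (v + t • u) :=
    (hf.contDiffAt (hU.mem_nhds ht)).differentiableAt (by simp)
  have hline : HasDerivAt (fun s : ℝ => v + s • u) u t := by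
    simpa using ((hasDerivAt_id t).smul_const u).const_add v
  exact hdiff.hasFDerivAt.comp_hasDerivAt t hline

lemma aux_snd (hU : IsOpen U) (hf : ContDiffOn ℝ (⊤ : ℕ∞) f U) {v : V} (hv : v ∈ U) (u w : V) :
    HasDerivAt (fun t : ℝ => fderiv ℝ f (v + t • u) w)
      (fderiv ℝ (fderiv ℝ f) v u w) 0 := by
  have h1 : ContDiffOn ℝ (⊤ : ℕ∞) (fderiv ℝ f) U := hf.fderiv_of_isOpen hU (by simp)
  have hd : DifferentiableAt ℝ (fderiv ℝ f) v :=
    (h1.contDiffAt (hU.mem_nhds hv)).differentiableAt (by simp)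
  have hline : HasDerivAt (fun t : ℝ => v + t • u) u 0 := by
    simpa using ((hasDerivAt_id (0:ℝ)).smul_const u).const_add v
  have h2 : HasDerivAt (fun t : ℝ => fderiv ℝ f (v + t • u))
      (fderiv ℝ (fderiv ℝ f) v u) 0 := by
    have h3 : HasFDerivAt (fderiv ℝ f) (fderiv ℝ (fderiv ℝ f) v) (v + (0:ℝ) • u) := by
      simpa using hd.hasFDerivAt
    exact h3.comp_hasDerivAt 0 hline
  simpa using h2.clm_apply (hasDerivAt_const (0:ℝ) w)

end Aux

section Aux2
variable {U : Set V} {F : V → ℝ}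

lemma fundTensor_eq_s8 (hU : IsOpen U)
    (hf : ContDiffOn ℝ (⊤ : ℕ∞) (fun x => (1 / 2 : ℝ) * F x ^ 2) U) {v : V} (hv : v ∈ U) (u w : V) :
    fundTensor F v u w = fderiv ℝ (fderiv ℝ (fun x => (1 / 2 : ℝ) * F x ^ 2)) v u w := by
  set f : V → ℝ := fun x => (1 / 2 : ℝ) * F x ^ 2 with hfdef
  have hmem : ∀ᶠ t : ℝ in 𝓝 0, v + t • u ∈ U := by
    have hc : ContinuousAt (fun t : ℝ => v + t • u) 0 := by fun_prop
    have := hc.preimage_mem_nhds (hU.mem_nhds (by simpa using hv))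
    exact this
  have hEq : (fun t : ℝ => deriv (fun s : ℝ => f (v + t • u + s • w)) 0)
      =ᶠ[𝓝 (0:ℝ)] fun t => fderiv ℝ f (v + t • u) w := by
    filter_upwards [hmem] with t ht
    have h1 : (v + t • u) + (0:ℝ) • w ∈ U := by simpa using ht
    have := (aux_line hU hf h1).deriv
    simpa using this
  have h2 : fundTensor F v u w
      = deriv (fun t : ℝ => deriv (fun s : ℝ => f (v + t • u + s • w)) 0) 0 := rfl
  rw [h2, hEq.deriv_eq]
  exact (aux_snd hU hf hv u w).deriv

end Aux2

lemma secondDerivTest {ψ G : ℝ → ℝ} {K : ℝ}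
    (hψ : ∀ᶠ t in 𝓝 (0:ℝ), HasDerivAt ψ (G t) t)
    (hG : HasDerivAt G K 0)
    (hmin : ∀ᶠ t in 𝓝 (0:ℝ), ψ 0 ≤ ψ t) : 0 ≤ K := by
  by_contra hK
  push_neg at hK
  have hG0 : G 0 = 0 := by
    have h1 : IsLocalMin ψ 0 := hmin
    have h2 := h1.deriv_eq_zero
    rwa [(hψ.self_of_nhds).deriv] at h2
  have hslope := hasDerivAt_iff_tendsto_slope.1 hG
  have hneg : ∀ᶠ t in 𝓝[>] (0:ℝ), G t < 0 := by
    have h3 : ∀ᶠ t in 𝓝[≠] (0:ℝ), slope G 0 t < 0 := hslope.eventually_lt_const hK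
    have h4 : ∀ᶠ t in 𝓝[>] (0:ℝ), slope G 0 t < 0 :=
      nhdsWithin_mono 0 (fun x hx => ne_of_gt hx) h3
    filter_upwards [h4, self_mem_nhdsWithin] with t h5 h6
    have h7 : slope G 0 t = G t / t := by simp [slope, hG0, div_eq_inv_mul]
    rw [h7] at h5
    rcases div_neg_iff.1 h5 with ⟨h8, h9⟩ | ⟨h8, _⟩
    · exact absurd h6 (by simpa using h9.not_gt)
    · exact h8
  obtain ⟨δ', hδ'pos, hδ'⟩ := mem_nhdsGT_iff_exists_Ioc_subset.1 hneg
  obtain ⟨ε, hεpos, hε⟩ := Metric.eventually_nhds_iff.1 (hψ.and hmin)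
  set δ : ℝ := min (ε / 2) δ' with hδdef
  have hδpos : 0 < δ := lt_min (by positivity) hδ'pos
  have hδε : ∀ t ∈ Icc (0:ℝ) δ, HasDerivAt ψ (G t) t ∧ ψ 0 ≤ ψ t := by
    intro t ht
    apply hε
    rw [Real.dist_eq]
    have := ht.1; have := ht.2
    have : δ ≤ ε / 2 := min_le_left _ _
    rw [abs_sub_lt_iff]; constructor <;> nlinarith [ht.1, ht.2]
  have hanti : StrictAntiOn ψ (Icc 0 δ) := by
    apply strictAntiOn_of_deriv_neg (convex_Icc 0 δ)
    · intro t ht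
      exact ((hδε t ht).1.continuousAt).continuousWithinAt
    · intro t ht
      rw [interior_Icc] at ht
      rw [(hδε t ⟨ht.1.le, ht.2.le⟩).1.deriv]
      exact hδ' ⟨ht.1, ht.2.le.trans (min_le_right _ _)⟩
  have h10 : ψ δ < ψ 0 :=
    hanti (left_mem_Icc.2 hδpos.le) (right_mem_Icc.2 hδpos.le) hδpos
  have h11 : ψ 0 ≤ ψ δ := (hδε δ (right_mem_Icc.2 hδpos.le)).2
  linarith

section PosDef
variable {F : V → ℝ}

lemma exists_posdef
    (hsm : ContDiffOn ℝ (⊤ : ℕ∞) (fun x => (1 / 2 : ℝ) * F x ^ 2) ({0}ᶜ : Set V))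
    (hsmF : ContDiffOn ℝ (⊤ : ℕ∞) F ({0}ᶜ : Set V))
    (hpos : ∀ v : V, v ≠ 0 → 0 < F v)
    (hhom : ∀ (v : V) (l : ℝ), 0 < l → F (l • v) = l * F v)
    (hex : ∃ x : V, x ≠ 0) :
    ∃ v₀ : V, v₀ ≠ 0 ∧ ∀ u : V, u ≠ 0 →
      0 < fderiv ℝ (fderiv ℝ (fun x => (1 / 2 : ℝ) * F x ^ 2)) v₀ u u := by
  set f : V → ℝ := fun x => (1 / 2 : ℝ) * F x ^ 2 with hfdef
  set e := toEuclidean (E := V) with hedef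
  set S : Set V := ⇑e ⁻¹' Metric.sphere 0 1 with hSdef
  have hSmem : ∀ y : V, y ∈ S ↔ ‖e y‖ = 1 := by
    intro y; simp [hSdef]
  have hScompact : IsCompact S := by
    have h1 : S = ⇑e.symm '' Metric.sphere 0 1 := by
      ext y
      constructor
      · intro hy; exact ⟨e y, hy, by simp⟩
      · rintro ⟨z, hz, rfl⟩
        simp only [hSdef, Set.mem_preimage, ContinuousLinearEquiv.apply_symm_apply]
        exact hz
    rw [h1]
    exact (isCompact_sphere 0 1).image e.symm.continuous
  have hS0 : ∀ y ∈ S, y ≠ (0 : V) := by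
    intro y hy h0
    rw [hSmem] at hy
    rw [h0] at hy
    simp at hy
  obtain ⟨x, hx0⟩ := hex
  have hmemS : ∀ y : V, y ≠ 0 → (‖e y‖)⁻¹ • y ∈ S := by
    intro y hy
    have hey : e y ≠ 0 := by simpa using hy
    have heyn : (0:ℝ) < ‖e y‖ := norm_pos_iff.2 hey
    rw [hSmem, map_smul, norm_smul]
    simp [abs_of_pos (inv_pos.2 heyn), inv_mul_cancel₀ heyn.ne']
  have hSne : S.Nonempty := ⟨_, hmemS x hx0⟩
  obtain ⟨v₀, hv₀S, hv₀min⟩ :=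
    hScompact.exists_isMinOn hSne (hsmF.continuousOn.mono (fun y hy => hS0 y hy))
  have hv₀0 : v₀ ≠ 0 := hS0 v₀ hv₀S
  set m := F v₀ with hmdef
  have hm : 0 < m := hpos v₀ hv₀0
  have hlow : ∀ y : V, y ≠ 0 → m * ‖e y‖ ≤ F y := by
    intro y hy
    have hey : e y ≠ 0 := by simpa using hy
    have heyn : (0:ℝ) < ‖e y‖ := norm_pos_iff.2 hey
    have h1 : m ≤ F ((‖e y‖)⁻¹ • y) := hv₀min (hmemS y hy)
    have h2 : F (‖e y‖ • ((‖e y‖)⁻¹ • y)) = ‖e y‖ * F ((‖e y‖)⁻¹ • y) :=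
      hhom _ _ heyn
    rw [smul_smul, mul_inv_cancel₀ heyn.ne', one_smul] at h2
    rw [h2]
    nlinarith
  refine ⟨v₀, hv₀0, fun u hu => ?_⟩
  have heu : e u ≠ 0 := by simpa using hu
  set b : ℝ := inner ℝ (e v₀) (e u) with hbdef
  set c : ℝ := ‖e u‖ ^ 2 with hcdef
  have hc : 0 < c := pow_pos (norm_pos_iff.2 heu) 2
  have hev₀ : ‖e v₀‖ = 1 := (hSmem v₀).1 hv₀S
  have hnorm : ∀ t : ℝ, ‖e (v₀ + t • u)‖ ^ 2 = 1 + 2 * b * t + c * t ^ 2 := by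
    intro t
    rw [map_add, map_smul, norm_add_sq_real, hev₀]
    rw [real_inner_smul_right, norm_smul]
    simp only [Real.norm_eq_abs, mul_pow, sq_abs]
    ring
  set ψ : ℝ → ℝ := fun t => f (v₀ + t • u) - m ^ 2 / 2 * (1 + 2 * b * t + c * t ^ 2)
    with hψdef
  have hU : IsOpen ({0}ᶜ : Set V) := isOpen_compl_singleton
  have hmem : ∀ᶠ t : ℝ in 𝓝 0, v₀ + t • u ∈ ({0}ᶜ : Set V) := by
    have hcont : ContinuousAt (fun t : ℝ => v₀ + t • u) 0 := by fun_prop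
    have := hcont.preimage_mem_nhds (hU.mem_nhds (by simpa using hv₀0))
    exact this
  have hψmin : ∀ᶠ t in 𝓝 (0:ℝ), ψ 0 ≤ ψ t := by
    filter_upwards [hmem] with t ht
    have ht' : v₀ + t • u ≠ 0 := ht
    have h1 : m * ‖e (v₀ + t • u)‖ ≤ F (v₀ + t • u) := hlow _ ht'
    have h2 : ψ 0 = 0 := by
      simp [hψdef, hfdef, ← hmdef]
      ring
    have h3 : m ^ 2 / 2 * ‖e (v₀ + t • u)‖ ^ 2 ≤ f (v₀ + t • u) := by
      have hF0 : 0 ≤ F (v₀ + t • u) := (hpos _ ht').le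
      have hn0 : 0 ≤ ‖e (v₀ + t • u)‖ := norm_nonneg _
      have h4 : (m * ‖e (v₀ + t • u)‖) ^ 2 ≤ F (v₀ + t • u) ^ 2 :=
        pow_le_pow_left₀ (mul_nonneg hm.le hn0) h1 2
      simp only [hfdef]
      nlinarith [h4]
    rw [h2]
    simp only [hψdef]
    rw [← hnorm t]
    linarith
  set G : ℝ → ℝ := fun t => fderiv ℝ f (v₀ + t • u) u - m ^ 2 / 2 * (2 * b + 2 * c * t)
    with hGdef
  have hψ' : ∀ᶠ t in 𝓝 (0:ℝ), HasDerivAt ψ (G t) t := by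
    filter_upwards [hmem] with t ht
    have h1 : HasDerivAt (fun s : ℝ => f (v₀ + s • u)) (fderiv ℝ f (v₀ + t • u) u) t :=
      aux_line hU hsm ht
    have h3 : HasDerivAt (fun s : ℝ => 1 + 2 * b * s + c * s ^ 2) (2 * b + 2 * c * t) t := by
      have := (((hasDerivAt_id t).const_mul (2 * b)).const_add 1).add
        ((hasDerivAt_pow 2 t).const_mul c)
      refine this.congr_deriv ?_
      norm_num
      ring
    exact h1.sub (h3.const_mul (m ^ 2 / 2))
  have hG : HasDerivAt G (fderiv ℝ (fderiv ℝ f) v₀ u u - m ^ 2 / 2 * (2 * c)) 0 := by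
    have h1 := aux_snd hU hsm (by simpa using hv₀0 : v₀ ∈ ({0}ᶜ : Set V)) u u
    have h3 : HasDerivAt (fun t : ℝ => 2 * b + 2 * c * t) (2 * c) 0 := by
      simpa using ((hasDerivAt_id (0:ℝ)).const_mul (2 * c)).const_add (2 * b)
    exact h1.sub (h3.const_mul (m ^ 2 / 2))
  have hkey := secondDerivTest hψ' hG hψmin
  nlinarith [mul_pos (mul_pos hm hm) hc]

end PosDef

lemma quad_aux {a bb : ℝ} (hb : 0 ≤ bb) (key : ∀ s : ℝ, 0 ≤ 2 * s * a + s ^ 2 * bb) :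
    a = 0 := by
  have hbb1 : (0:ℝ) < bb + 1 := by linarith
  have h1 := key (-(a / (bb + 1)))
  have h2 : 0 ≤ (2 * (-(a / (bb + 1))) * a + (-(a / (bb + 1))) ^ 2 * bb) * (bb + 1) ^ 2 :=
    mul_nonneg h1 (by positivity)
  have h3 : (2 * (-(a / (bb + 1))) * a + (-(a / (bb + 1))) ^ 2 * bb) * (bb + 1) ^ 2
      = -(a ^ 2) * (bb + 2) := by
    field_simp
    ring
  rw [h3] at h2
  have h4 : a ^ 2 ≤ 0 := by nlinarith
  have h5 : a ^ 2 = 0 := le_antisymm h4 (sq_nonneg a)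
  exact sq_eq_zero_iff.1 h5


/-- If a Minkowski pseudo-norm is not a Minkowski norm (its fundamental tensor fails to be
positive definite at some nonzero vector), then the fundamental tensor is degenerate at
some direction. -/
theorem stmt8 (F : V → ℝ) (hF : IsMinkowskiConicPseudoNorm (Set.univ : Set V) F)
    (hnot : ∃ v : V, v ≠ 0 ∧ ¬ (∀ w : V, w ≠ 0 → 0 < fundTensor F v w w)) :
    ∃ v₁ : V, v₁ ≠ 0 ∧ ∃ w : V, w ≠ 0 ∧ ∀ u : V, fundTensor F v₁ w u = 0 := by
  obtain ⟨v, hv0, hvbad⟩ := hnot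
  push_neg at hvbad
  obtain ⟨w₀, hw₀0, hw₀le⟩ := hvbad
  by_contra hcon
  push_neg at hcon
  set f : V → ℝ := fun x => (1 / 2 : ℝ) * F x ^ 2 with hfdef
  have hU : IsOpen ({0}ᶜ : Set V) := isOpen_compl_singleton
  have hsmF : ContDiffOn ℝ (⊤ : ℕ∞) F ({0}ᶜ : Set V) := by
    have := hF.smooth
    rwa [show (Set.univ : Set V) \ {0} = ({0}ᶜ : Set V) by ext y; simp] at this
  have hsm : ContDiffOn ℝ (⊤ : ℕ∞) f ({0}ᶜ : Set V) := contDiffOn_const.mul (hsmF.pow 2)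
  have hpos : ∀ x : V, x ≠ 0 → 0 < F x := fun x hx =>
    lt_of_le_of_ne (hF.nonneg x trivial) fun h => hx (hF.eq_zero x trivial h.symm)
  have hhom : ∀ (x : V) (l : ℝ), 0 < l → F (l • x) = l * F x := fun x l hl =>
    hF.homog x trivial l hl
  haveI : Nontrivial V := nontrivial_of_ne v 0 hv0
  by_cases hdim : Module.finrank ℝ V ≤ 1
  · -- dimension one : direct computation contradicts hw₀le
    have hrank : Module.finrank ℝ V = 1 :=
      le_antisymm hdim Module.finrank_pos
    obtain ⟨c, hc⟩ := (finrank_eq_one_iff_of_nonzero' v hv0).1 hrank w₀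
    have hc0 : c ≠ 0 := by
      rintro rfl; rw [zero_smul] at hc; exact hw₀0 hc.symm
    have hA : 0 < F v := hpos v hv0
    have hbound : (0:ℝ) < 1 / (2 * (|c| + 1)) := by positivity
    have habs : ∀ t : ℝ, |t| < 1 / (2 * (|c| + 1)) → |t * c| < 1 / 2 := by
      intro t ht
      rw [abs_mul]
      have h1 : |t| * |c| ≤ |t| * (|c| + 1) := by nlinarith [abs_nonneg t, abs_nonneg c]
      have h2 : |t| * (|c| + 1) < (1 / (2 * (|c| + 1))) * (|c| + 1) := by
        apply mul_lt_mul_of_pos_right ht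
        positivity
      have hne : |c| + (1:ℝ) ≠ 0 := by positivity
      have h3 : (1 / (2 * (|c| + 1))) * (|c| + 1) = 1 / 2 := by field_simp
      linarith
    have key : fundTensor F v w₀ w₀ = (F v) ^ 2 * c ^ 2 := by
      have hEq : (fun t : ℝ => deriv (fun s : ℝ => (1 / 2) * F (v + t • w₀ + s • w₀) ^ 2) 0)
          =ᶠ[𝓝 (0:ℝ)] fun t => (F v) ^ 2 * ((1 + t * c) * c) := by
        filter_upwards [eventually_abs_sub_lt (0:ℝ) hbound] with t ht
        rw [sub_zero] at ht
        have hsEq : (fun s : ℝ => (1 / 2) * F (v + t • w₀ + s • w₀) ^ 2)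
            =ᶠ[𝓝 (0:ℝ)] fun s => (1 / 2) * ((1 + (t + s) * c) * F v) ^ 2 := by
          filter_upwards [eventually_abs_sub_lt (0:ℝ) hbound] with s hs
          rw [sub_zero] at hs
          have h1 : 0 < 1 + (t + s) * c := by
            have h2 := habs t ht
            have h3 := habs s hs
            have h4 : |(t + s) * c| ≤ |t * c| + |s * c| := by
              rw [add_mul]; exact abs_add_le _ _
            have h5 := neg_abs_le ((t + s) * c)
            linarith
          have h6 : v + t • w₀ + s • w₀ = (1 + (t + s) * c) • v := by
            rw [← hc]; module
          rw [h6, hhom v _ h1]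
        rw [hsEq.deriv_eq]
        have hd : HasDerivAt (fun s : ℝ => (1 / 2) * ((1 + (t + s) * c) * F v) ^ 2)
            ((F v) ^ 2 * ((1 + t * c) * c)) 0 := by
          have h1 : HasDerivAt (fun s : ℝ => (1 + (t + s) * c) * F v) (c * F v) 0 := by
            have h2 : HasDerivAt (fun s : ℝ => 1 + (t + s) * c) c 0 := by
              simpa using (((hasDerivAt_id (0:ℝ)).const_add t).mul_const c).const_add 1
            simpa using h2.mul_const (F v)
          have := (h1.pow 2).const_mul (1 / 2 : ℝ)
          refine this.congr_deriv ?_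
          simp
          ring
        exact hd.deriv
      have h7 : fundTensor F v w₀ w₀
          = deriv (fun t : ℝ => deriv (fun s : ℝ => (1 / 2) * F (v + t • w₀ + s • w₀) ^ 2) 0) 0 :=
        rfl
      rw [h7, hEq.deriv_eq]
      have hd2 : HasDerivAt (fun t : ℝ => (F v) ^ 2 * ((1 + t * c) * c)) ((F v) ^ 2 * c ^ 2) 0 := by
        have h2 : HasDerivAt (fun t : ℝ => (1 + t * c) * c) (c * c) 0 := by
          simpa using (((hasDerivAt_id (0:ℝ)).mul_const c).const_add 1).mul_const c
        have := h2.const_mul ((F v) ^ 2)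
        refine this.congr_deriv ?_
        ring
      exact hd2.deriv
    rw [key] at hw₀le
    nlinarith [pow_pos hA 2, pow_pos (abs_pos.2 hc0) 2, sq_abs c]
  · -- dimension at least two
    push_neg at hdim
    set g : V → V →L[ℝ] V →L[ℝ] ℝ := fderiv ℝ (fderiv ℝ f) with hgdef
    have hft : ∀ x : V, x ≠ 0 → ∀ u w, fundTensor F x u w = g x u w := fun x hx u w =>
      fundTensor_eq_s8 hU hsm (by simpa using hx) u w
    have hsymm : ∀ x : V, x ≠ 0 → ∀ u w, g x u w = g x w u := by
      intro x hx u w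
      have hx' : x ∈ ({0}ᶜ : Set V) := by simpa using hx
      have hev : ∀ᶠ y in 𝓝 x, HasFDerivAt f (fderiv ℝ f y) y := by
        filter_upwards [hU.mem_nhds hx'] with y hy
        exact ((hsm.contDiffAt (hU.mem_nhds hy)).differentiableAt (by simp)).hasFDerivAt
      have hx2 : HasFDerivAt (fderiv ℝ f) (g x) x :=
        (((hsm.fderiv_of_isOpen (m := (⊤ : ℕ∞)) hU (by simp)).contDiffAt
          (hU.mem_nhds hx')).differentiableAt (by simp)).hasFDerivAt
      exact second_derivative_symmetric_of_eventually_of_real hev hx2 u w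
    have hgc : ContinuousOn g ({0}ᶜ : Set V) :=
      ((hsm.fderiv_of_isOpen (m := (⊤ : ℕ∞)) hU (by simp)).fderiv_of_isOpen (m := (⊤ : ℕ∞)) hU (by simp)).continuousOn
    have hconn : IsConnected ({0}ᶜ : Set V) := by
      apply isConnected_compl_singleton_of_one_lt_rank
      rw [← Module.finrank_eq_rank]
      exact_mod_cast hdim
    set P : Set V := {x | x ≠ 0 ∧ ∀ w : V, w ≠ 0 → 0 < g x w w} with hPdef
    obtain ⟨v₀, hv₀0, hv₀⟩ := exists_posdef hsm hsmF hpos hhom ⟨v, hv0⟩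
    have hv₀P : v₀ ∈ P := ⟨hv₀0, hv₀⟩
    -- openness of P
    have hPopen : IsOpen P := by
      rw [isOpen_iff_mem_nhds]
      intro x hx
      have hGc : ContinuousOn (fun p : V × V => g p.1 p.2 p.2)
          ((({0}ᶜ : Set V)) ×ˢ (Set.univ : Set V)) := by
        apply ContinuousOn.clm_apply
        · apply ContinuousOn.clm_apply
          · exact hgc.comp continuous_fst.continuousOn fun p hp => hp.1
          · exact continuous_snd.continuousOn
        · exact continuous_snd.continuousOn
      have hopen : IsOpen {p : V × V | p.1 ≠ 0 ∧ 0 < g p.1 p.2 p.2} := by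
        have h1 : {p : V × V | p.1 ≠ 0 ∧ 0 < g p.1 p.2 p.2}
            = ((({0}ᶜ : Set V)) ×ˢ (Set.univ : Set V)) ∩
              ((fun p : V × V => g p.1 p.2 p.2) ⁻¹' (Set.Ioi 0)) := by
          ext p
          simp only [Set.mem_setOf_eq, Set.mem_inter_iff, Set.mem_prod, Set.mem_compl_iff,
            Set.mem_singleton_iff, Set.mem_univ, and_true, Set.mem_preimage, Set.mem_Ioi]
        rw [h1]
        exact hGc.isOpen_inter_preimage (hU.prod isOpen_univ) isOpen_Ioi
      have hsub : ({x} : Set V) ×ˢ Metric.sphere (0:V) 1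
          ⊆ {p : V × V | p.1 ≠ 0 ∧ 0 < g p.1 p.2 p.2} := by
        rintro ⟨a, w⟩ ⟨ha, hw⟩
        simp only [Set.mem_singleton_iff] at ha
        subst ha
        have hw1 : ‖w‖ = 1 := by simpa using hw
        have hwne : w ≠ 0 := by
          intro h; rw [h] at hw1; simp at hw1
        exact ⟨hx.1, hx.2 w hwne⟩
      obtain ⟨u', v', hu'o, _, hxu', hsv', huv⟩ :=
        generalized_tube_lemma isCompact_singleton (isCompact_sphere (0:V) 1) hopen hsub
      apply Filter.mem_of_superset (hu'o.mem_nhds (hxu' rfl))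
      intro y hy
      obtain ⟨z, hz1⟩ := exists_norm_eq V zero_le_one
      have hzs : z ∈ Metric.sphere (0:V) 1 := by simpa using hz1
      have hy0 : y ≠ 0 := (huv (Set.mk_mem_prod hy (hsv' hzs))).1
      refine ⟨hy0, fun w hw => ?_⟩
      have hwn : (0:ℝ) < ‖w‖ := norm_pos_iff.2 hw
      set w' : V := (‖w‖)⁻¹ • w with hw'def
      have hw's : w' ∈ Metric.sphere (0:V) 1 := by
        simp only [mem_sphere_iff_norm, sub_zero, hw'def, norm_smul]
        rw [norm_inv, norm_norm, inv_mul_cancel₀ hwn.ne']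
      have hpos2 : 0 < g y w' w' := (huv (Set.mk_mem_prod hy (hsv' hw's))).2
      have hexp : w = ‖w‖ • w' := by
        rw [hw'def, smul_smul, mul_inv_cancel₀ hwn.ne', one_smul]
      have hval : g y w w = ‖w‖ ^ 2 * g y w' w' := by
        conv_lhs => rw [hexp]
        simp only [map_smul, ContinuousLinearMap.smul_apply, smul_eq_mul,
          ContinuousLinearMap.map_smul]
        ring
      rw [hval]
      exact mul_pos (pow_pos hwn 2) hpos2
    -- relative closedness of P
    have hPclos : closure P ∩ ({0}ᶜ : Set V) ⊆ P := by
      rintro x ⟨hxc, hx0'⟩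
      have hx0 : x ≠ 0 := hx0'
      by_contra hxP
      have hpsd : ∀ w : V, 0 ≤ g x w w := by
        intro w
        rcases eq_or_ne w 0 with rfl | hw
        · simp
        · haveI hne : (𝓝[P] x).NeBot := mem_closure_iff_nhdsWithin_neBot.1 hxc
          have hcont : ContinuousWithinAt (fun y : V => g y w w) P x := by
            apply ContinuousAt.continuousWithinAt
            have h1 : ContinuousAt g x := hgc.continuousAt (hU.mem_nhds hx0')
            have h2 : ContinuousAt (fun y : V => g y w) x :=
              ((ContinuousLinearMap.apply ℝ (V →L[ℝ] ℝ) w).continuous.continuousAt).comp h1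
            exact ((ContinuousLinearMap.apply ℝ ℝ w).continuous.continuousAt).comp h2
          refine ge_of_tendsto hcont ?_
          filter_upwards [eventually_mem_nhdsWithin] with y hy
          exact (hy.2 w hw).le
      have hxP' : ¬ ∀ w : V, w ≠ 0 → 0 < g x w w := fun h => hxP ⟨hx0, h⟩
      push_neg at hxP'
      obtain ⟨w, hw0, hwle⟩ := hxP'
      have hww : g x w w = 0 := le_antisymm hwle (hpsd w)
      have hker : ∀ u : V, g x w u = 0 := by
        intro u
        have hb : 0 ≤ g x u u := hpsd u
        have key : ∀ s : ℝ, 0 ≤ 2 * s * g x w u + s ^ 2 * g x u u := by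
          intro s
          have h1 := hpsd (w + s • u)
          have hexp : g x (w + s • u) (w + s • u)
              = g x w w + s * g x w u + s * g x u w + s ^ 2 * g x u u := by
            simp only [map_add, map_smul, ContinuousLinearMap.add_apply,
              ContinuousLinearMap.smul_apply, smul_eq_mul]
            ring
          rw [hexp, hww, hsymm x hx0 u w] at h1
          linarith
        exact quad_aux hb key
      obtain ⟨u, hu⟩ := hcon x hx0 w hw0
      exact hu (by rw [hft x hx0 w u]; exact hker u)
    have hPall : ({0}ᶜ : Set V) ⊆ P :=
      hconn.isPreconnected.subset_of_closure_inter_subset hPopen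
        ⟨v₀, by simpa using hv₀0, hv₀P⟩ hPclos
    have hvP : v ∈ P := hPall (by simpa using hv0)
    have hfin := hvP.2 w₀ hw₀0
    rw [← hft v hv0 w₀ w₀] at hfin
    linarith
end

section
/- Let F₁, …, F_n be Minkowski conic norms on V defined on the same conic domain A, with fundamental tensors g¹, …, gⁿ. Then F = F₁ + ⋯ + F_n is a Minkowski conic norm on A, and its fundamental tensor is given by g_v(w,w) = F(v) Σ_{k=1}^n h^k_v(w,w)/F_k(v) + (Σ_{k=1}^n g^k_v(v,w)/F_k(v))² for all v ∈ A ∖ {0} and w ∈ V. -/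
open Set Topology Filter

set_option linter.unusedSectionVars false

variable {V : Type*} [NormedAddCommGroup V] [NormedSpace ℝ V] [FiniteDimensional ℝ V]

section Aux

variable {A : Set V} {F : V → ℝ} {v : V}

private lemma eventually_contDiffAt (h : IsMinkowskiConicPseudoNorm A F)
    (hv : v ∈ A) (hv0 : v ≠ 0) : ∀ᶠ x in 𝓝 v, ContDiffAt ℝ (⊤ : ℕ∞) F x := by
  have hU : IsOpen (A \ {0} : Set V) := h.conic.2.1.sdiff isClosed_singleton
  filter_upwards [hU.mem_nhds ⟨hv, hv0⟩] with x hx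
  exact h.smooth.contDiffAt (hU.mem_nhds hx)

private lemma F_pos_s13 (h : IsMinkowskiConicPseudoNorm A F) (hv : v ∈ A) (hv0 : v ≠ 0) :
    0 < F v :=
  (h.nonneg v hv).lt_of_ne fun e => hv0 (h.eq_zero v hv e.symm)

private lemma fundTensor_eq_s13 (hF : ∀ᶠ x in 𝓝 v, ContDiffAt ℝ (⊤ : ℕ∞) F x) (u w : V) :
    fundTensor F v u w =
      fderiv ℝ F v u * fderiv ℝ F v w + F v * fderiv ℝ (fderiv ℝ F) v u w := by
  have hFd : ∀ᶠ x in 𝓝 v, HasFDerivAt F (fderiv ℝ F x) x :=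
    hF.mono fun x hx => (hx.differentiableAt (by simp)).hasFDerivAt
  have hH : HasFDerivAt (fderiv ℝ F) (fderiv ℝ (fderiv ℝ F) v) v := by
    have h1 : ContDiffAt ℝ (⊤ : ℕ∞) (fderiv ℝ F) v := hF.self_of_nhds.fderiv_right (by simp)
    exact (h1.differentiableAt (by simp)).hasFDerivAt
  have hG : ∀ᶠ x in 𝓝 v, HasFDerivAt (fun y => (1/2 : ℝ) * F y ^ 2)
      (F x • fderiv ℝ F x) x := by
    filter_upwards [hFd] with x hx
    have h3 : (fun y => (1/2 : ℝ) * F y ^ 2) = fun y => (1/2 : ℝ) * (F y * F y) := by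
      funext y; ring
    rw [h3]
    have h2 := (hx.mul hx).const_mul (1/2 : ℝ)
    refine h2.congr_fderiv ?_
    ext y
    simp [smul_eq_mul]
    ring
  have hlin : ∀ (a : V) (z : V), HasDerivAt (fun s : ℝ => a + s • z) z 0 := fun a z => by
    simpa using ((hasDerivAt_id (0:ℝ)).smul_const z).const_add a
  have hinner : (fun t : ℝ => deriv (fun s : ℝ => (1 / 2 : ℝ) * (F (v + t • u + s • w)) ^ 2) 0)
      =ᶠ[𝓝 (0:ℝ)] fun t => (F (v + t • u) • fderiv ℝ F (v + t • u)) w := by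
    have hcont : Tendsto (fun t : ℝ => v + t • u) (𝓝 0) (𝓝 v) := by
      have hc : Continuous fun t : ℝ => v + t • u := by continuity
      have := hc.tendsto 0
      simpa using this
    filter_upwards [hcont.eventually hG] with t ht
    have hl := hlin (v + t • u) w
    have ht' : HasFDerivAt (fun y => (1/2 : ℝ) * F y ^ 2)
        (F (v + t • u) • fderiv ℝ F (v + t • u)) ((fun s : ℝ => v + t • u + s • w) 0) := by
      simpa using ht
    exact (ht'.comp_hasDerivAt 0 hl).deriv
  have hΦ : HasFDerivAt (fun x => F x • fderiv ℝ F x)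
      (F v • fderiv ℝ (fderiv ℝ F) v + (fderiv ℝ F v).smulRight (fderiv ℝ F v)) v :=
    HasFDerivAt.smul (hFd.self_of_nhds) hH
  have houter : HasDerivAt (fun t : ℝ => (F (v + t • u) • fderiv ℝ F (v + t • u)) w)
      ((F v • fderiv ℝ (fderiv ℝ F) v + (fderiv ℝ F v).smulRight (fderiv ℝ F v)) u w) 0 := by
    have hl := hlin v u
    have hΦ' : HasFDerivAt (fun x => F x • fderiv ℝ F x)
        (F v • fderiv ℝ (fderiv ℝ F) v + (fderiv ℝ F v).smulRight (fderiv ℝ F v))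
        ((fun t : ℝ => v + t • u) 0) := by simpa using hΦ
    have hcomp := hΦ'.comp_hasDerivAt 0 hl
    have := hcomp.clm_apply (hasDerivAt_const (0:ℝ) w)
    simpa using this
  unfold fundTensor
  rw [hinner.deriv_eq, houter.deriv]
  simp [ContinuousLinearMap.add_apply, ContinuousLinearMap.smul_apply,
    ContinuousLinearMap.smulRight_apply, smul_eq_mul]
  ring

private lemma euler_one (h : IsMinkowskiConicPseudoNorm A F) (hv : v ∈ A) (hv0 : v ≠ 0) :
    fderiv ℝ F v v = F v := by
  have hF := eventually_contDiffAt h hv hv0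
  have hFv : HasFDerivAt F (fderiv ℝ F v) v :=
    ((hF.self_of_nhds).differentiableAt (by simp)).hasFDerivAt
  have hline : HasDerivAt (fun l : ℝ => l • v) v 1 := by
    simpa using (hasDerivAt_id (1:ℝ)).smul_const v
  have hFv' : HasFDerivAt F (fderiv ℝ F v) ((fun l : ℝ => l • v) 1) := by simpa using hFv
  have h1 : HasDerivAt (fun l : ℝ => F (l • v)) (fderiv ℝ F v v) 1 :=
    hFv'.comp_hasDerivAt 1 hline
  have h2 : (fun l : ℝ => F (l • v)) =ᶠ[𝓝 (1:ℝ)] fun l => l * F v := by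
    filter_upwards [eventually_gt_nhds one_pos] with l hl
    exact h.homog v hv l hl
  have h4 : HasDerivAt (fun l : ℝ => l * F v) (F v) 1 := by
    simpa using (hasDerivAt_id (1:ℝ)).mul_const (F v)
  exact h1.unique (h4.congr_of_eventuallyEq h2)

private lemma euler_two (h : IsMinkowskiConicPseudoNorm A F) (hv : v ∈ A) (hv0 : v ≠ 0) :
    fderiv ℝ (fderiv ℝ F) v v = (0 : V →L[ℝ] ℝ) := by
  have hF := eventually_contDiffAt h hv hv0
  have hH : HasFDerivAt (fderiv ℝ F) (fderiv ℝ (fderiv ℝ F) v) v :=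
    ((hF.self_of_nhds.fderiv_right (m := (⊤ : ℕ∞)) (by simp)).differentiableAt (by simp)).hasFDerivAt
  have hline : HasDerivAt (fun l : ℝ => l • v) v 1 := by
    simpa using (hasDerivAt_id (1:ℝ)).smul_const v
  have hH' : HasFDerivAt (fderiv ℝ F) (fderiv ℝ (fderiv ℝ F) v) ((fun l : ℝ => l • v) 1) := by
    simpa using hH
  have h1 : HasDerivAt (fun l : ℝ => fderiv ℝ F (l • v)) (fderiv ℝ (fderiv ℝ F) v v) 1 :=
    hH'.comp_hasDerivAt 1 hline
  have h2 : (fun l : ℝ => fderiv ℝ F (l • v)) =ᶠ[𝓝 (1:ℝ)] fun _ => fderiv ℝ F v := by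
    filter_upwards [eventually_gt_nhds one_pos] with l hl
    have hlv : l • v ∈ A := h.conic.2.2 v hv l hl
    have hlv0 : l • v ≠ 0 := smul_ne_zero hl.ne' hv0
    have hFlv : HasFDerivAt F (fderiv ℝ F (l • v)) (l • v) := by
      have h6 := eventually_contDiffAt h hlv hlv0
      exact ((h6.self_of_nhds).differentiableAt (by simp)).hasFDerivAt
    have hsc : HasFDerivAt (fun x : V => l • x) (l • ContinuousLinearMap.id ℝ V) v :=
      (hasFDerivAt_id v).const_smul l
    have hFlv' : HasFDerivAt F (fderiv ℝ F (l • v)) ((fun x : V => l • x) v) := hFlv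
    have hc1 : HasFDerivAt (fun x : V => F (l • x))
        ((fderiv ℝ F (l • v)).comp (l • ContinuousLinearMap.id ℝ V)) v :=
      hFlv'.comp v hsc
    have hFv : HasFDerivAt F (fderiv ℝ F v) v :=
      ((hF.self_of_nhds).differentiableAt (by simp)).hasFDerivAt
    have hc2 : HasFDerivAt (fun x : V => l * F x) (l • fderiv ℝ F v) v := hFv.const_mul l
    have heq : (fun x : V => l * F x) =ᶠ[𝓝 v] fun x => F (l • x) := by
      filter_upwards [h.conic.2.1.mem_nhds hv] with x hx
      exact (h.homog x hx l hl).symm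
    have h5 : (fderiv ℝ F (l • v)).comp (l • ContinuousLinearMap.id ℝ V) = l • fderiv ℝ F v :=
      (hc1.congr_of_eventuallyEq heq).unique hc2
    have h6 : l • fderiv ℝ F (l • v) = l • fderiv ℝ F v := by
      rw [← h5]; ext x; simp
    exact smul_right_injective (V →L[ℝ] ℝ) hl.ne' h6
  have h3 : HasDerivAt (fun l : ℝ => fderiv ℝ F (l • v)) 0 1 :=
    (hasDerivAt_const (1:ℝ) (fderiv ℝ F v)).congr_of_eventuallyEq h2
  exact h1.unique h3

private lemma fund_vw (h : IsMinkowskiConicPseudoNorm A F) (hv : v ∈ A) (hv0 : v ≠ 0) (w : V) :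
    fundTensor F v v w = F v * fderiv ℝ F v w := by
  rw [fundTensor_eq_s13 (eventually_contDiffAt h hv hv0), euler_one h hv hv0,
    euler_two h hv hv0]
  simp

private lemma angular_eq (h : IsMinkowskiConicPseudoNorm A F) (hv : v ∈ A) (hv0 : v ≠ 0)
    (w : V) : angular F v w = F v * fderiv ℝ (fderiv ℝ F) v w w := by
  have hFv : (F v) ≠ 0 := (F_pos_s13 h hv hv0).ne'
  unfold angular
  rw [fundTensor_eq_s13 (eventually_contDiffAt h hv hv0), fund_vw h hv hv0]
  field_simp
  ring

private lemma H_nonneg (h : IsMinkowskiConicNorm A F) (hv : v ∈ A) (hv0 : v ≠ 0) (w : V) :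
    0 ≤ fderiv ℝ (fderiv ℝ F) v w w ∧
      (fderiv ℝ (fderiv ℝ F) v w w = 0 → ∃ c : ℝ, w = c • v) := by
  have hF := eventually_contDiffAt h.1 hv hv0
  have hFd : ∀ᶠ x in 𝓝 v, HasFDerivAt F (fderiv ℝ F x) x :=
    hF.mono fun x hx => (hx.differentiableAt (by simp)).hasFDerivAt
  have hH : HasFDerivAt (fderiv ℝ F) (fderiv ℝ (fderiv ℝ F) v) v :=
    ((hF.self_of_nhds.fderiv_right (m := (⊤ : ℕ∞)) (by simp)).differentiableAt (by simp)).hasFDerivAt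
  have hsymm := second_derivative_symmetric_of_eventually hFd hH
  have hFv : 0 < F v := F_pos_s13 h.1 hv hv0
  have hHv : fderiv ℝ (fderiv ℝ F) v v = (0 : V →L[ℝ] ℝ) := euler_two h.1 hv hv0
  have hwv : fderiv ℝ (fderiv ℝ F) v w v = 0 := by
    rw [hsymm w v, hHv]
    simp
  set c : ℝ := fderiv ℝ F v w / F v with hc
  have hdzero : fderiv ℝ F v (w - c • v) = 0 := by
    rw [map_sub, map_smul, euler_one h.1 hv hv0, hc, smul_eq_mul]
    field_simp
    ring
  have hHw : fderiv ℝ (fderiv ℝ F) v (w - c • v) (w - c • v)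
      = fderiv ℝ (fderiv ℝ F) v w w := by
    simp only [map_sub, map_smul, ContinuousLinearMap.sub_apply,
      ContinuousLinearMap.smul_apply, smul_eq_mul, hHv, hwv,
      ContinuousLinearMap.zero_apply]
    ring
  have hq : fundTensor F v (w - c • v) (w - c • v)
      = F v * fderiv ℝ (fderiv ℝ F) v w w := by
    rw [fundTensor_eq_s13 hF, hdzero, hHw]
    ring
  by_cases hw0 : w - c • v = 0
  · have hwc : w = c • v := sub_eq_zero.mp hw0
    have hz : fderiv ℝ (fderiv ℝ F) v w w = 0 := by
      rw [← hHw, hw0]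
      simp
    exact ⟨hz.ge, fun _ => ⟨c, hwc⟩⟩
  · have hpos : 0 < fundTensor F v (w - c • v) (w - c • v) := h.2 v hv hv0 _ hw0
    rw [hq] at hpos
    have hHpos : 0 < fderiv ℝ (fderiv ℝ F) v w w := by nlinarith
    exact ⟨hHpos.le, fun h0 => absurd h0 hHpos.ne'⟩

end Aux

/-- The sum of finitely many Minkowski conic norms on a common conic domain is again a
Minkowski conic norm, with an explicit formula for its fundamental tensor. -/
theorem stmt13 {n : ℕ} (hn : 0 < n) (A : Set V) (Fk : Fin n → V → ℝ)
    (hFk : ∀ k, IsMinkowskiConicNorm A (Fk k)) :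
    IsMinkowskiConicNorm A (fun v => ∑ k, Fk k v) ∧
    ∀ v ∈ A, v ≠ 0 → ∀ w : V,
      fundTensor (fun v => ∑ k, Fk k v) v w w =
        (∑ k, Fk k v) * (∑ k, angular (Fk k) v w / Fk k v)
        + (∑ k, fundTensor (Fk k) v v w / Fk k v) ^ 2 := by
  set k0 : Fin n := ⟨0, hn⟩ with hk0
  have hpseudo : IsMinkowskiConicPseudoNorm A (fun v => ∑ k, Fk k v) :=
    { conic := (hFk k0).1.conic
      nonneg := fun v hv => Finset.sum_nonneg fun k _ => (hFk k).1.nonneg v hv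
      eq_zero := fun v hv h0 => by
        have hz := (Finset.sum_eq_zero_iff_of_nonneg
          (fun k _ => (hFk k).1.nonneg v hv)).mp h0 k0 (Finset.mem_univ _)
        exact (hFk k0).1.eq_zero v hv hz
      homog := fun v hv l hl => by
        rw [Finset.mul_sum]
        exact Finset.sum_congr rfl fun k _ => (hFk k).1.homog v hv l hl
      smooth := ContDiffOn.sum fun k _ => (hFk k).1.smooth }
  have hU : IsOpen (A \ {0} : Set V) := hpseudo.conic.2.1.sdiff isClosed_singleton
  -- key formula
  have key : ∀ v ∈ A, v ≠ 0 → ∀ w : V,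
      fundTensor (fun x => ∑ k, Fk k x) v w w =
        (∑ k, fderiv ℝ (Fk k) v w) ^ 2
          + (∑ k, Fk k v) * (∑ k, fderiv ℝ (fderiv ℝ (Fk k)) v w w) := by
    intro v hv hv0 w
    have hcd : ∀ x ∈ (A \ {0} : Set V), ∀ k, ContDiffAt ℝ (⊤ : ℕ∞) (Fk k) x := fun x hx k =>
      (hFk k).1.smooth.contDiffAt (hU.mem_nhds hx)
    have hder : ∀ x ∈ (A \ {0} : Set V),
        HasFDerivAt (fun x => ∑ k, Fk k x) (∑ k, fderiv ℝ (Fk k) x) x := fun x hx =>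
      HasFDerivAt.fun_sum fun k _ => ((hcd x hx k).differentiableAt (by simp)).hasFDerivAt
    have hdsum : fderiv ℝ (fun x => ∑ k, Fk k x) v = ∑ k, fderiv ℝ (Fk k) v :=
      (hder v ⟨hv, hv0⟩).fderiv
    have hHk : ∀ k, HasFDerivAt (fderiv ℝ (Fk k)) (fderiv ℝ (fderiv ℝ (Fk k)) v) v := fun k =>
      (((((eventually_contDiffAt (hFk k).1 hv hv0).self_of_nhds).fderiv_right (m := (⊤ : ℕ∞))
        (by simp))).differentiableAt (by simp)).hasFDerivAt
    have hHsum : fderiv ℝ (fderiv ℝ (fun x => ∑ k, Fk k x)) v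
        = ∑ k, fderiv ℝ (fderiv ℝ (Fk k)) v := by
      have he : fderiv ℝ (fun x => ∑ k, Fk k x) =ᶠ[𝓝 v] fun x => ∑ k, fderiv ℝ (Fk k) x := by
        filter_upwards [hU.mem_nhds ⟨hv, hv0⟩] with x hx
        exact (hder x hx).fderiv
      rw [he.fderiv_eq]
      exact (HasFDerivAt.fun_sum fun k _ => hHk k).fderiv
    rw [fundTensor_eq_s13 (eventually_contDiffAt hpseudo hv hv0), hdsum, hHsum]
    simp only [ContinuousLinearMap.coe_sum', Finset.sum_apply]
    ring
  -- positivity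
  have hposdef : ∀ v ∈ A, v ≠ 0 → ∀ w : V, w ≠ 0 →
      0 < fundTensor (fun x => ∑ k, Fk k x) v w w := by
    intro v hv hv0 w hw0
    rw [key v hv hv0 w]
    have hFkpos : ∀ k, 0 < Fk k v := fun k => F_pos_s13 (hFk k).1 hv hv0
    have hSpos : 0 < ∑ k, Fk k v :=
      Finset.sum_pos (fun k _ => hFkpos k) ⟨k0, Finset.mem_univ _⟩
    have hHnn : ∀ k, 0 ≤ fderiv ℝ (fderiv ℝ (Fk k)) v w w := fun k =>
      (H_nonneg (hFk k) hv hv0 w).1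
    have hsum_nn : 0 ≤ (∑ k, Fk k v) * ∑ k, fderiv ℝ (fderiv ℝ (Fk k)) v w w :=
      mul_nonneg hSpos.le (Finset.sum_nonneg fun k _ => hHnn k)
    by_cases hd : (∑ k, fderiv ℝ (Fk k) v w) = 0
    · rw [hd]
      have hHpos : 0 < ∑ k, fderiv ℝ (fderiv ℝ (Fk k)) v w w := by
        rcases (Finset.sum_nonneg fun k (_ : k ∈ Finset.univ) => hHnn k).lt_or_eq with hlt | heq
        · exact hlt
        · exfalso
          have hall := (Finset.sum_eq_zero_iff_of_nonneg fun k _ => hHnn k).mp heq.symm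
          obtain ⟨c, hcw⟩ := (H_nonneg (hFk k0) hv hv0 w).2 (hall k0 (Finset.mem_univ _))
          have hde : ∑ k, fderiv ℝ (Fk k) v w = c * ∑ k, Fk k v := by
            rw [Finset.mul_sum]
            refine Finset.sum_congr rfl fun k _ => ?_
            rw [hcw, map_smul, euler_one (hFk k).1 hv hv0, smul_eq_mul]
          rw [hde] at hd
          have hc0 : c = 0 := by
            rcases mul_eq_zero.mp hd with h | h
            · exact h
            · exact absurd h hSpos.ne'
          rw [hc0, zero_smul] at hcw
          exact hw0 hcw
      have := mul_pos hSpos hHpos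
      simpa using this
    · have h2 : 0 < (∑ k, fderiv ℝ (Fk k) v w) ^ 2 :=
        lt_of_le_of_ne (sq_nonneg _) (Ne.symm (pow_ne_zero 2 hd))
      exact add_pos_of_pos_of_nonneg h2 hsum_nn
  refine ⟨⟨hpseudo, hposdef⟩, ?_⟩
  intro v hv hv0 w
  rw [key v hv hv0 w]
  have hFkpos : ∀ k, 0 < Fk k v := fun k => F_pos_s13 (hFk k).1 hv hv0
  have e1 : ∑ k, angular (Fk k) v w / Fk k v
      = ∑ k, fderiv ℝ (fderiv ℝ (Fk k)) v w w := by
    refine Finset.sum_congr rfl fun k _ => ?_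
    rw [angular_eq (hFk k).1 hv hv0]
    exact mul_div_cancel_left₀ _ (hFkpos k).ne'
  have e2 : ∑ k, fundTensor (Fk k) v v w / Fk k v = ∑ k, fderiv ℝ (Fk k) v w := by
    refine Finset.sum_congr rfl fun k _ => ?_
    rw [fund_vw (hFk k).1 hv hv0]
    exact mul_div_cancel_left₀ _ (hFkpos k).ne'
  rw [e1, e2]
  ring
end

section
/- Assume dim V = N > 2. Let F₀ be a Minkowski conic norm on V with conic domain A₀ and fundamental tensor g⁰, let β be a linear form on V, let B ⊆ ℝ² be a conic open subset, and let L : B → ℝ be continuous, smooth and positive on B ∖ {0}, and positively homogeneous of degree 2. Let A ⊆ A₀ be a conic domain with (F₀(v), β(v)) ∈ B for all v ∈ A, and define F : A → ℝ by F(v) = √(L(F₀(v), β(v))). If F is a Minkowski conic norm (its fundamental tensor is positive definite at every v ∈ A ∖ {0}), then the first partial derivative L_{,1} of L is strictly positive at (F₀(v), β(v)) for every v ∈ A ∖ {0}. -/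
open Set Topology

variable {V : Type*} [NormedAddCommGroup V] [NormedSpace ℝ V] [FiniteDimensional ℝ V]

/-- For `dim V > 2`: if an `(F₀,β)`-metric `F = √(L(F₀,β))` is a Minkowski conic norm,
then the first partial derivative `L_{,1}` is strictly positive along the metric. -/
theorem stmt15 (hdim : 2 < Module.finrank ℝ V)
    {A₀ : Set V} {F₀ : V → ℝ} (hF₀ : IsMinkowskiConicNorm A₀ F₀)
    (β : V →ₗ[ℝ] ℝ)
    (B : Set (ℝ × ℝ)) (hBopen : IsOpen B)
    (hBconic : ∀ x ∈ B, ∀ l : ℝ, 0 < l → l • x ∈ B)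
    (L : ℝ × ℝ → ℝ) (hLcont : ContinuousOn L B)
    (hLsmooth : ContDiffOn ℝ (⊤ : ℕ∞) L (B \ {0}))
    (hLpos : ∀ x ∈ B \ ({0} : Set (ℝ × ℝ)), 0 < L x)
    (hLhom : ∀ x ∈ B, ∀ l : ℝ, 0 < l → L (l • x) = l ^ 2 * L x)
    (A : Set V) (hA : IsConicDomain A) (hAA₀ : A ⊆ A₀)
    (hAB : ∀ v ∈ A, (F₀ v, β v) ∈ B)
    (F : V → ℝ) (hFdef : F = fun v => Real.sqrt (L (F₀ v, β v)))
    (hF : IsMinkowskiConicNorm A F) :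
    ∀ v ∈ A, v ≠ 0 → 0 < fderiv ℝ L (F₀ v, β v) (1, 0) := by
  intro v hv hv0
  obtain ⟨hF₀pn, hF₀pd⟩ := hF₀
  obtain ⟨hFpn, hFpd⟩ := hF
  have hvA₀ : v ∈ A₀ := hAA₀ hv
  have hO₀ : IsOpen (A₀ \ {0} : Set V) := hF₀pn.conic.2.1.sdiff isClosed_singleton
  have hOA : IsOpen (A \ {0} : Set V) := hA.2.1.sdiff isClosed_singleton
  have hBO : IsOpen (B \ {0} : Set (ℝ × ℝ)) := hBopen.sdiff isClosed_singleton
  have hvO : v ∈ A₀ \ {0} := ⟨hvA₀, hv0⟩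
  have hF₀pos : ∀ x ∈ A, x ≠ 0 → 0 < F₀ x := by
    intro x hx hx0
    rcases (hF₀pn.nonneg x (hAA₀ hx)).lt_or_eq with h | h
    · exact h
    · exact absurd (hF₀pn.eq_zero x (hAA₀ hx) h.symm) hx0
  have hF₀sm : ContDiffAt ℝ (⊤ : ℕ∞) F₀ v := hF₀pn.smooth.contDiffAt (hO₀.mem_nhds hvO)
  set D := fderiv ℝ F₀ v with hD
  -- choose the direction w
  obtain ⟨w, hw0, hβw, hDw⟩ : ∃ w : V, w ≠ 0 ∧ β w = 0 ∧ D w = 0 := by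
    set T : V →ₗ[ℝ] ℝ × ℝ := β.prod (D : V →ₗ[ℝ] ℝ) with hT
    have hrange : Module.finrank ℝ (LinearMap.range T) ≤ 2 := by
      have h := Submodule.finrank_le (LinearMap.range T)
      simpa using h
    have hsum := LinearMap.finrank_range_add_finrank_ker T
    have hker : 0 < Module.finrank ℝ (LinearMap.ker T) := by omega
    have hne : LinearMap.ker T ≠ ⊥ := by
      intro h
      rw [h, finrank_bot] at hker
      omega
    obtain ⟨w, hwT, hw0⟩ := Submodule.exists_mem_ne_zero_of_ne_bot hne
    have := LinearMap.mem_ker.mp hwT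
    rw [hT, LinearMap.prod_apply] at this
    exact ⟨w, hw0, congrArg Prod.fst this, congrArg Prod.snd this⟩
  -- the curve and auxiliary functions
  set c : ℝ → V := fun r => v + r • w with hcdef
  have hc0 : c 0 = v := by simp [hcdef]
  have hcsm : ContDiff ℝ (⊤ : ℕ∞) c := contDiff_const.add (contDiff_id.smul contDiff_const)
  have hmem : ∀ᶠ r in 𝓝 (0 : ℝ), c r ∈ A \ {0} := by
    have h0 : c 0 ∈ A \ {0} := by rw [hc0]; exact ⟨hv, hv0⟩
    exact hcsm.continuous.continuousAt.preimage_mem_nhds (hOA.mem_nhds h0)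
  set u : ℝ → ℝ := fun r => F₀ (c r) with hudef
  set b : ℝ := β v with hbdef
  have hβc : ∀ r : ℝ, β (c r) = b := by
    intro r; simp [hcdef, hbdef, map_add, map_smul, hβw]
  have hub : ∀ᶠ r in 𝓝 (0 : ℝ), (u r, b) ∈ B \ {0} := by
    filter_upwards [hmem] with r hr
    have hBmem : (u r, b) ∈ B := by
      have := hAB _ hr.1
      rwa [← hβc r]
    have hupos : 0 < u r := hF₀pos _ hr.1 hr.2
    refine ⟨hBmem, ?_⟩
    simp only [mem_singleton_iff, Prod.ext_iff, not_and]
    intro h; exact absurd h hupos.ne'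
  -- smoothness of u near 0
  have husmat : ContDiffAt ℝ (⊤ : ℕ∞) u 0 := by
    have : ContDiffAt ℝ (⊤ : ℕ∞) F₀ (c 0) := by rw [hc0]; exact hF₀sm
    exact this.comp 0 hcsm.contDiffAt
  obtain ⟨s, hs, hus⟩ : ∃ s ∈ 𝓝 (0 : ℝ), ContDiffOn ℝ (⊤ : ℕ∞) u s :=
    ⟨c ⁻¹' (A₀ \ {0}), hcsm.continuous.continuousAt.preimage_mem_nhds
      (by rw [hc0]; exact hO₀.mem_nhds hvO), hF₀pn.smooth.comp hcsm.contDiffOn (fun r hr => hr)⟩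
  obtain ⟨U, hUs, hUopen, hU0⟩ := mem_nhds_iff.mp hs
  have husU : ContDiffOn ℝ (⊤ : ℕ∞) u U := hus.mono hUs
  have hu'r : ∀ r ∈ U, HasDerivAt u (deriv u r) r := by
    intro r hr
    exact ((husU.contDiffAt (hUopen.mem_nhds hr)).differentiableAt (by simp)).hasDerivAt
  have hderivu : ContDiffOn ℝ (⊤ : ℕ∞) (deriv u) U := husU.deriv_of_isOpen hUopen (by simp)
  -- deriv u 0 = 0
  have hcd : HasDerivAt c w 0 := by
    have h1 : HasDerivAt (fun r : ℝ => r • w) ((1 : ℝ) • w) 0 := (hasDerivAt_id 0).smul_const w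
    simpa [hcdef] using h1.const_add v
  have hu0has : HasDerivAt u (D w) 0 := by
    have hdF : HasFDerivAt F₀ D v := (hF₀sm.differentiableAt (by simp)).hasFDerivAt
    have : HasFDerivAt F₀ D (c 0) := by rwa [hc0]
    exact this.comp_hasDerivAt 0 hcd
  have hu'0 : deriv u 0 = 0 := by rw [hu0has.deriv, hDw]
  have hu''has : HasDerivAt (deriv u) (deriv (deriv u) 0) 0 :=
    ((hderivu.contDiffAt (hUopen.mem_nhds hU0)).differentiableAt (by simp)).hasDerivAt
  set u'' : ℝ := deriv (deriv u) 0 with hu''def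
  -- the functions ψ (for F) and ψ₀ (for F₀) along the line
  set G : ℝ → ℝ × ℝ := fun r => (u r, b) with hGdef
  set L₁ : ℝ × ℝ → ℝ := fun p => fderiv ℝ L p (1, 0) with hL₁def
  set P : ℝ → ℝ := fun r => L₁ (G r) with hPdef
  have hL₁sm : ContDiffOn ℝ (⊤ : ℕ∞) L₁ (B \ {0}) :=
    (hLsmooth.fderiv_of_isOpen hBO (by simp)).clm_apply contDiffOn_const
  set ψ : ℝ → ℝ := fun r => (1 / 2) * L (G r) with hψdef
  set ψ₀ : ℝ → ℝ := fun r => (1 / 2) * (F₀ (c r)) ^ 2 with hψ₀def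
  have hub0 : (u 0, b) ∈ B \ {0} := hub.self_of_nhds
  -- derivative of ψ
  have hψ' : ∀ᶠ r in 𝓝 (0 : ℝ), HasDerivAt ψ ((1 / 2) * (deriv u r * P r)) r := by
    filter_upwards [hub, hUopen.eventually_mem hU0] with r hrB hrU
    have hu' := hu'r r hrU
    have hGd : HasDerivAt G (deriv u r, 0) r := HasDerivAt.prodMk hu' (hasDerivAt_const r b)
    have hLd : HasFDerivAt L (fderiv ℝ L (G r)) (G r) :=
      ((hLsmooth.contDiffAt (hBO.mem_nhds hrB)).differentiableAt (by simp)).hasFDerivAt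
    have hcomp : HasDerivAt (fun r => L (G r)) (fderiv ℝ L (G r) (deriv u r, 0)) r :=
      hLd.comp_hasDerivAt r hGd
    have heq : fderiv ℝ L (G r) (deriv u r, 0) = deriv u r * P r := by
      have h1 : ((deriv u r, (0 : ℝ)) : ℝ × ℝ) = deriv u r • ((1 : ℝ), (0 : ℝ)) := by
        simp [Prod.smul_mk]
      rw [h1, map_smul, hPdef, hL₁def, smul_eq_mul]
    rw [heq] at hcomp
    exact hcomp.const_mul (1 / 2)
  have hψderiv : deriv ψ =ᶠ[𝓝 (0 : ℝ)] fun r => (1 / 2) * (deriv u r * P r) :=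
    hψ'.mono fun r h => h.deriv
  -- differentiability of P at 0
  have hP0diff : DifferentiableAt ℝ P 0 := by
    have h1 : ContDiffAt ℝ (⊤ : ℕ∞) L₁ (G 0) := hL₁sm.contDiffAt (hBO.mem_nhds hub0)
    have hGdiff : DifferentiableAt ℝ G 0 :=
      DifferentiableAt.prodMk hu0has.differentiableAt (differentiableAt_const b)
    exact (h1.differentiableAt (by simp)).comp 0 hGdiff
  -- second derivative of ψ at 0
  have key1 : deriv (deriv ψ) 0 = (1 / 2) * (u'' * P 0) := by
    rw [hψderiv.deriv_eq]
    have hprod : HasDerivAt (fun r => deriv u r * P r)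
        (u'' * P 0 + deriv u 0 * deriv P 0) 0 := hu''has.mul hP0diff.hasDerivAt
    rw [(hprod.const_mul (1 / 2)).deriv, hu'0]
    ring
  -- derivative of ψ₀
  have hψ₀' : ∀ᶠ r in 𝓝 (0 : ℝ), HasDerivAt ψ₀ (u r * deriv u r) r := by
    filter_upwards [hUopen.eventually_mem hU0] with r hrU
    have hu' := hu'r r hrU
    have h2 : HasDerivAt (fun r => u r ^ 2) ((2 : ℕ) * u r ^ (2 - 1) * deriv u r) r := hu'.pow 2
    have h3 := h2.const_mul (1 / 2 : ℝ)
    have : (1 / 2 : ℝ) * ((2 : ℕ) * u r ^ (2 - 1) * deriv u r) = u r * deriv u r := by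
      push_cast; ring
    rw [this] at h3
    exact h3
  have hψ₀deriv : deriv ψ₀ =ᶠ[𝓝 (0 : ℝ)] fun r => u r * deriv u r :=
    hψ₀'.mono fun r h => h.deriv
  have key2 : deriv (deriv ψ₀) 0 = u 0 * u'' := by
    rw [hψ₀deriv.deriv_eq]
    have hprod : HasDerivAt (fun r => u r * deriv u r)
        (deriv u 0 * deriv u 0 + u 0 * u'') 0 := hu0has.deriv ▸ hu0has.mul hu''has
    rw [hprod.deriv, hu'0]; ring
  -- fundTensor F v w w = ψ''(0)
  have hlin : ∀ t s : ℝ, v + t • w + s • w = c (t + s) := by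
    intro t s; simp [hcdef, add_smul]; abel
  have hfund : fundTensor F v w w = deriv (deriv ψ) 0 := by
    set χ : ℝ → ℝ := fun r => (1 / 2) * (F (c r)) ^ 2 with hχdef
    have hχψ : χ =ᶠ[𝓝 (0 : ℝ)] ψ := by
      filter_upwards [hmem, hub] with r hr hrB
      have hL0 : 0 < L (G r) := hLpos _ hrB
      have hFc : F (c r) = Real.sqrt (L (G r)) := by
        rw [hFdef]
        simp only [hGdef]
        rw [hβc r]
      rw [hχdef, hψdef]
      simp only [hFc, Real.sq_sqrt hL0.le]
    have hAll : ∀ t : ℝ, deriv (fun s : ℝ => (1 / 2) * F (v + t • w + s • w) ^ 2) 0 = deriv χ t := by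
      intro t
      have hfun : (fun s : ℝ => (1 / 2) * F (v + t • w + s • w) ^ 2) = fun s : ℝ => χ (t + s) := by
        funext s; rw [hχdef]; rw [hlin t s]
      rw [hfun, deriv_comp_const_add χ t 0, add_zero]
    unfold fundTensor
    simp only [hAll]
    exact (hχψ.deriv).deriv_eq
  have hfund₀ : fundTensor F₀ v w w = deriv (deriv ψ₀) 0 := by
    have hAll : ∀ t : ℝ, deriv (fun s : ℝ => (1 / 2) * F₀ (v + t • w + s • w) ^ 2) 0 = deriv ψ₀ t := by
      intro t
      have hfun : (fun s : ℝ => (1 / 2) * F₀ (v + t • w + s • w) ^ 2) = fun s : ℝ => ψ₀ (t + s) := by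
        funext s; rw [hψ₀def]; rw [hlin t s]
      rw [hfun, deriv_comp_const_add ψ₀ t 0, add_zero]
    unfold fundTensor
    simp only [hAll]
  -- conclude
  have h1 : 0 < fundTensor F v w w := hFpd v hv hv0 w hw0
  have h2 : 0 < fundTensor F₀ v w w := hF₀pd v hvA₀ hv0 w hw0
  rw [hfund, key1] at h1
  rw [hfund₀, key2] at h2
  have hu0pos : 0 < u 0 := by
    simp only [hudef, hc0]
    exact hF₀pos v hv hv0
  have hPeq : P 0 = fderiv ℝ L (F₀ v, β v) (1, 0) := by
    simp only [hPdef, hL₁def, hGdef, hudef, hbdef, hc0]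
  clear_value D c u b G L₁ P ψ ψ₀ u''
  have hu''pos : 0 < u'' := by
    have h3 := mul_pos (inv_pos.mpr hu0pos) h2
    rwa [inv_mul_cancel_left₀ hu0pos.ne'] at h3
  have hP0pos : 0 < P 0 := by
    have h4 : 0 < u'' * P 0 := by linarith
    have h5 := mul_pos (inv_pos.mpr hu''pos) h4
    rwa [inv_mul_cancel_left₀ hu''pos.ne'] at h5
  rw [hbdef, ← hPeq]
  exact hP0pos
end

section
/- Let φ : I → ℝ be a smooth positive function on an interval I ⊆ ℝ, let F₀ be a Minkowski conic norm on V with conic domain A₀ and fundamental tensor g⁰, and let β be a linear form on V. Define F(v) = F₀(v) φ(β(v)/F₀(v)) on A := {v ∈ A₀ ∖ {0} : β(v)/F₀(v) ∈ I}. Set ψ = φ², φ₁ = 2ψ − sψ̇ and φ₂ = 2ψψ̈ − ψ̇². Then F is a Minkowski conic pseudo-norm on A, and for every v ∈ A and w ∈ V, writing s = β(v)/F₀(v), its fundamental tensor satisfies 2 g_v(w,w) = φ₁(s) h⁰_v(w,w) + ½ ψ(s)⁻¹ φ₂(s) ((β(v)/F₀(v)²) g⁰_v(v,w) − β(w))²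 + ½ ψ(s)⁻¹ (φ₁(s) g⁰_v(v,w)/F₀(v) + ψ̇(s) β(w))², where h⁰_v is the angular metric of F₀. Moreover, if φ(s) − s φ̇(s) > 0 and φ̈(s) ≥ 0 for all s ∈ I, then g_v is positive definite for every v ∈ A, i.e. F is a Minkowski conic norm. -/
open Set Topology

variable {V : Type*} [NormedAddCommGroup V] [NormedSpace ℝ V] [FiniteDimensional ℝ V]

/-- `ψ = φ²`. -/
noncomputable def psiOf (φ : ℝ → ℝ) : ℝ → ℝ := fun s => (φ s) ^ 2

/-- `φ₁ = 2ψ − s ψ̇`. -/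
noncomputable def phi1Of (φ : ℝ → ℝ) : ℝ → ℝ :=
  fun s => 2 * psiOf φ s - s * deriv (psiOf φ) s

/-- `φ₂ = 2ψψ̈ − ψ̇²`. -/
noncomputable def phi2Of (φ : ℝ → ℝ) : ℝ → ℝ :=
  fun s => 2 * psiOf φ s * deriv (deriv (psiOf φ)) s - (deriv (psiOf φ) s) ^ 2

set_option linter.unusedSectionVars false
set_option linter.unusedVariables false
set_option maxHeartbeats 1000000

lemma fundTensor_diag (F : V → ℝ) (v w : V) :
    fundTensor F v w w
      = deriv (deriv (fun r : ℝ => (1 / 2) * (F (v + r • w)) ^ 2)) 0 := by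
  unfold fundTensor
  have h : ∀ t : ℝ, (fun s : ℝ => (1 / 2) * (F (v + t • w + s • w)) ^ 2)
      = fun s : ℝ => (fun r : ℝ => (1 / 2) * (F (v + r • w)) ^ 2) (t + s) := by
    intro t; funext s; simp [add_smul, add_assoc]
  have h2 : (fun t : ℝ => deriv (fun s : ℝ => (1 / 2) * (F (v + t • w + s • w)) ^ 2) 0)
      = fun t : ℝ => deriv (fun r : ℝ => (1 / 2) * (F (v + r • w)) ^ 2) t := by
    funext t; rw [h t]
    simpa only [add_zero] using deriv_comp_const_add (fun r : ℝ => (1 / 2) * (F (v + r • w)) ^ 2) t 0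
  rw [h2]

lemma fundTensor_radial {A : Set V} (hA : IsOpen A) {F : V → ℝ}
    (hhom : ∀ v ∈ A, ∀ l : ℝ, 0 < l → F (l • v) = l * F v)
    {v : V} (hv : v ∈ A) (w : V)
    (hdiff : DifferentiableAt ℝ (fun r : ℝ => (1 / 2) * (F (v + r • w)) ^ 2) 0) :
    fundTensor F v v w = deriv (fun r : ℝ => (1 / 2) * (F (v + r • w)) ^ 2) 0 := by
  set p : ℝ → ℝ := fun r : ℝ => (1 / 2) * (F (v + r • w)) ^ 2 with hp
  set K : ℝ := deriv p 0 with hK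
  unfold fundTensor
  have key : (fun t : ℝ => deriv (fun s : ℝ => (1 / 2) * (F (v + t • v + s • w)) ^ 2) 0)
      =ᶠ[𝓝 (0:ℝ)] fun t : ℝ => (1 + t) * K := by
    have hnb : Ioi (-1 : ℝ) ∈ 𝓝 (0:ℝ) := Ioi_mem_nhds (by norm_num)
    filter_upwards [hnb] with t ht
    have hc : (0:ℝ) < 1 + t := by linarith [mem_Ioi.mp ht]
    set c : ℝ := 1 + t with hcdef
    -- inner eventual equality in s
    have hev : (fun s : ℝ => (1 / 2) * (F (v + t • v + s • w)) ^ 2)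
        =ᶠ[𝓝 (0:ℝ)] fun s : ℝ => c ^ 2 * p (s / c) := by
      have hcont : ContinuousAt (fun s : ℝ => v + (s / c) • w) 0 := by fun_prop
      have hmem : ∀ᶠ s : ℝ in 𝓝 0, v + (s / c) • w ∈ A := by
        have : A ∈ 𝓝 (v + ((0:ℝ) / c) • w) := by
          simpa using hA.mem_nhds hv
        exact hcont.eventually_mem this
      filter_upwards [hmem] with s hs
      have h1 : v + t • v + s • w = c • (v + (s / c) • w) := by
        rw [smul_add, smul_smul]
        rw [mul_div_cancel₀ _ (ne_of_gt hc)]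
        module
      rw [h1, hhom _ hs c hc, hp]
      ring
    rw [hev.deriv_eq]
    have hp0 : HasDerivAt p K 0 := by rw [hK]; exact hdiff.hasDerivAt
    have hcomp : HasDerivAt (fun s : ℝ => c ^ 2 * p (s / c)) (c ^ 2 * (K * (1 / c))) 0 := by
      have hid : HasDerivAt (fun s : ℝ => s / c) (1 / c) (0:ℝ) := by
        simpa using (hasDerivAt_id (0:ℝ)).div_const c
      have : HasDerivAt (fun s : ℝ => p (s / c)) (K * (1 / c)) 0 := by
        have hp0' : HasDerivAt p K ((0:ℝ) / c) := by simpa using hp0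
        have := hp0'.comp (0:ℝ) hid
        exact this
      exact this.const_mul _
    rw [hcomp.deriv]
    field_simp
  rw [key.deriv_eq]
  have : HasDerivAt (fun t : ℝ => (1 + t) * K) K 0 := by
    simpa using (((hasDerivAt_id (0:ℝ)).const_add 1).mul_const K)
  simpa using this.deriv

lemma derivAt_of_contDiffOn {U : Set ℝ} (hU : IsOpen U) {f : ℝ → ℝ}
    (hf : ContDiffOn ℝ (⊤ : ℕ∞) f U) : ∀ x ∈ U, HasDerivAt f (deriv f x) x := by
  intro x hx
  exact ((hf.contDiffAt (hU.mem_nhds hx)).differentiableAt (by simp)).hasDerivAt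

lemma deriv_contDiffOn {U : Set ℝ} (hU : IsOpen U) {f : ℝ → ℝ}
    (hf : ContDiffOn ℝ (⊤ : ℕ∞) f U) : ContDiffOn ℝ (⊤ : ℕ∞) (deriv f) U :=
  hf.deriv_of_isOpen hU (by simp)

/-- Compute first and second derivatives from an eventual first-derivative formula. -/
lemma deriv2_eq {g g1 : ℝ → ℝ} {c : ℝ}
    (h1 : ∀ᶠ r in 𝓝 (0:ℝ), HasDerivAt g (g1 r) r) (h2 : HasDerivAt g1 c 0) :
    deriv g 0 = g1 0 ∧ deriv (deriv g) 0 = c := by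
  have hev : deriv g =ᶠ[𝓝 (0:ℝ)] g1 := h1.mono fun r h => h.deriv
  exact ⟨hev.self_of_nhds, by rw [hev.deriv_eq, h2.deriv]⟩

/-- Core computation: first and second derivative at `0` of
`p r = ½ a(r)² ψ((b0+r·b1)/a(r))`. -/
lemma calc_main {U : Set ℝ} (hU : IsOpen U) (hU0 : (0:ℝ) ∈ U)
    {a : ℝ → ℝ} (ha : ContDiffOn ℝ (⊤ : ℕ∞) a U) (ha0 : a 0 ≠ 0)
    {I : Set ℝ} (hI : IsOpen I) {ψ : ℝ → ℝ} (hψ : ContDiffOn ℝ (⊤ : ℕ∞) ψ I)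
    (b0 b1 : ℝ) (hs : b0 / a 0 ∈ I) :
    DifferentiableAt ℝ (fun r : ℝ => (1/2) * (a r)^2 * ψ ((b0 + r * b1) / a r)) 0 ∧
    deriv (fun r : ℝ => (1/2) * (a r)^2 * ψ ((b0 + r * b1) / a r)) 0
      = a 0 * deriv a 0 * ψ (b0 / a 0)
        + (1/2) * (b1 * a 0 - b0 * deriv a 0) * deriv ψ (b0 / a 0) ∧
    deriv (deriv (fun r : ℝ => (1/2) * (a r)^2 * ψ ((b0 + r * b1) / a r))) 0
      = ((deriv a 0)^2 + a 0 * deriv (deriv a) 0) * ψ (b0 / a 0)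
        + a 0 * deriv a 0 * deriv ψ (b0 / a 0) * ((b1 * a 0 - b0 * deriv a 0) / (a 0)^2)
        - (1/2) * b0 * deriv (deriv a) 0 * deriv ψ (b0 / a 0)
        + (1/2) * (a 0)^2 * deriv (deriv ψ) (b0 / a 0)
            * ((b1 * a 0 - b0 * deriv a 0) / (a 0)^2)^2 := by
  have hD1 := derivAt_of_contDiffOn hU ha
  have hD2 := derivAt_of_contDiffOn hU (deriv_contDiffOn hU ha)
  have hE1 := derivAt_of_contDiffOn hI hψ
  have hE2 := derivAt_of_contDiffOn hI (deriv_contDiffOn hI hψ)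
  set σ : ℝ → ℝ := fun r => (b0 + r * b1) / a r with hσdef
  have hσ0 : σ 0 = b0 / a 0 := by simp [hσdef]
  have hacont : ContinuousAt a 0 := (hD1 0 hU0).continuousAt
  have hane : ∀ᶠ r in 𝓝 (0:ℝ), a r ≠ 0 := hacont.eventually_ne ha0
  have hσcont : ContinuousAt σ 0 := by
    exact (continuousAt_const.add (continuousAt_id.mul continuousAt_const)).div hacont ha0
  have hσI : ∀ᶠ r in 𝓝 (0:ℝ), σ r ∈ I := by
    apply hσcont.eventually_mem
    rw [hσ0]; exact hI.mem_nhds hs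
  have hUev : ∀ᶠ r in 𝓝 (0:ℝ), r ∈ U := hU.mem_nhds hU0
  set dσ : ℝ → ℝ := fun r => (b1 * a r - (b0 + r * b1) * deriv a r) / (a r)^2 with hdσdef
  have hσd : ∀ r, r ∈ U → a r ≠ 0 → HasDerivAt σ (dσ r) r := by
    intro r hrU hra
    have hb : HasDerivAt (fun x : ℝ => b0 + x * b1) b1 r := by
      simpa using ((hasDerivAt_id r).mul_const b1).const_add b0
    have := hb.div (hD1 r hrU) hra
    exact this
  set p1 : ℝ → ℝ := fun r =>
    a r * deriv a r * ψ (σ r)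
      + (1/2) * (b1 * a r - (b0 + r * b1) * deriv a r) * deriv ψ (σ r) with hp1def
  have h1 : ∀ᶠ r in 𝓝 (0:ℝ),
      HasDerivAt (fun r : ℝ => (1/2) * (a r)^2 * ψ (σ r)) (p1 r) r := by
    filter_upwards [hUev, hane, hσI] with r hrU hra hrI
    have Ha := hD1 r hrU
    have Hσ := hσd r hrU hra
    have Hψσ : HasDerivAt (fun x => ψ (σ x)) (deriv ψ (σ r) * dσ r) r :=
      (hE1 _ hrI).comp r Hσ
    have Hsq : HasDerivAt (fun x : ℝ => (1/2) * (a x)^2)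
        ((1/2) * ((2:ℕ) * a r ^ 1 * deriv a r)) r := (Ha.pow 2).const_mul (1/2)
    have := Hsq.mul Hψσ
    refine this.congr_deriv ?_
    simp only [hp1def, hdσdef]
    field_simp
    ring
  have h2 : HasDerivAt p1
      ((deriv a 0 * deriv a 0 + a 0 * deriv (deriv a) 0) * ψ (σ 0)
        + (a 0 * deriv a 0) * (deriv ψ (σ 0) * dσ 0)
        + ((1/2) * (b1 * deriv a 0 - (b1 * deriv a 0 + (b0 + 0 * b1) * deriv (deriv a) 0))
              * deriv ψ (σ 0)
          + ((1/2) * (b1 * a 0 - (b0 + 0 * b1) * deriv a 0))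
              * (deriv (deriv ψ) (σ 0) * dσ 0))) 0 := by
    have Ha := hD1 0 hU0
    have Ha' := hD2 0 hU0
    have Hσ := hσd 0 hU0 ha0
    have hσ0I : σ 0 ∈ I := by rw [hσ0]; exact hs
    have Hψσ : HasDerivAt (fun x => ψ (σ x)) (deriv ψ (σ 0) * dσ 0) 0 :=
      (hE1 _ hσ0I).comp 0 Hσ
    have Hψ'σ : HasDerivAt (fun x => deriv ψ (σ x)) (deriv (deriv ψ) (σ 0) * dσ 0) 0 :=
      (hE2 _ hσ0I).comp 0 Hσ
    have hb : HasDerivAt (fun x : ℝ => b1 * a x) (b1 * deriv a 0) 0 := Ha.const_mul b1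
    have hb2 : HasDerivAt (fun x : ℝ => (b0 + x * b1) * deriv a x)
        (b1 * deriv a 0 + (b0 + 0 * b1) * deriv (deriv a) 0) 0 := by
      have hlin : HasDerivAt (fun x : ℝ => b0 + x * b1) b1 0 := by
        simpa using ((hasDerivAt_id 0).mul_const b1).const_add b0
      exact hlin.mul Ha'
    exact ((Ha.mul Ha').mul Hψσ).add (((hb.sub hb2).const_mul (1/2)).mul Hψ'σ)
  obtain ⟨hfst, hsnd⟩ := deriv2_eq h1 h2
  refine ⟨(h1.self_of_nhds).differentiableAt, ?_, ?_⟩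
  · rw [hfst]; simp only [hp1def, hσ0]; norm_num
  · rw [hsnd]
    simp only [hσ0, hdσdef]
    field_simp
    ring

/-- If `g` agrees near `0` with `r ↦ (1-rμ)·a(r/(1-rμ))`, then `g'(0) = a'(0) - μ a(0)`
and `g''(0) = a''(0)`. -/
lemma calc_homog {U : Set ℝ} (hU : IsOpen U) (hU0 : (0:ℝ) ∈ U)
    {a : ℝ → ℝ} (ha : ContDiffOn ℝ (⊤ : ℕ∞) a U) (μ : ℝ) {g : ℝ → ℝ}
    (hg : g =ᶠ[𝓝 (0:ℝ)] fun r => (1 - r * μ) * a (r / (1 - r * μ))) :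
    deriv g 0 = deriv a 0 - μ * a 0 ∧ deriv (deriv g) 0 = deriv (deriv a) 0 := by
  have hD1 := derivAt_of_contDiffOn hU ha
  have hD2 := derivAt_of_contDiffOn hU (deriv_contDiffOn hU ha)
  set ρ : ℝ → ℝ := fun r => r / (1 - r * μ) with hρdef
  have hρ0 : ρ 0 = 0 := by simp [hρdef]
  have hcne : ∀ᶠ r in 𝓝 (0:ℝ), 1 - r * μ ≠ 0 := by
    have : ContinuousAt (fun r : ℝ => 1 - r * μ) 0 := by fun_prop
    simpa using this.eventually_ne (by norm_num)
  have hρcont : ContinuousAt ρ 0 := by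
    apply continuousAt_id.div (by fun_prop); norm_num
  have hρU : ∀ᶠ r in 𝓝 (0:ℝ), ρ r ∈ U := by
    apply hρcont.eventually_mem; rw [hρ0]; exact hU.mem_nhds hU0
  have hρd : ∀ r, 1 - r * μ ≠ 0 → HasDerivAt ρ (1 / (1 - r * μ)^2) r := by
    intro r hr
    have hlin : HasDerivAt (fun x : ℝ => 1 - x * μ) (-μ) r := by
      simpa using (((hasDerivAt_id r).mul_const μ).const_sub 1)
    have := (hasDerivAt_id r).div hlin hr
    refine this.congr_deriv ?_
    simp only [id]
    field_simp
    ring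
  set g1 : ℝ → ℝ := fun r => -μ * a (ρ r) + deriv a (ρ r) / (1 - r * μ) with hg1def
  have h1 : ∀ᶠ r in 𝓝 (0:ℝ), HasDerivAt g (g1 r) r := by
    filter_upwards [hcne, hρU, hg.eventually_nhds] with r hr hrU hgr
    have hlin : HasDerivAt (fun x : ℝ => 1 - x * μ) (-μ) r := by
      simpa using (((hasDerivAt_id r).mul_const μ).const_sub 1)
    have Haρ : HasDerivAt (fun x => a (ρ x)) (deriv a (ρ r) * (1 / (1 - r * μ)^2)) r :=
      (hD1 _ hrU).comp r (hρd r hr)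
    have Hf : HasDerivAt (fun x => (1 - x * μ) * a (ρ x))
        (-μ * a (ρ r) + (1 - r * μ) * (deriv a (ρ r) * (1 / (1 - r * μ)^2))) r :=
      hlin.mul Haρ
    have Hg : HasDerivAt g
        (-μ * a (ρ r) + (1 - r * μ) * (deriv a (ρ r) * (1 / (1 - r * μ)^2))) r :=
      Hf.congr_of_eventuallyEq hgr
    convert Hg using 1
    simp only [hg1def]
    field_simp
    try ring
  have h2 : HasDerivAt g1
      (-μ * (deriv a (ρ 0) * (1 / (1 - 0 * μ)^2))
        + ((deriv (deriv a) (ρ 0) * (1 / (1 - 0 * μ)^2)) * (1 - 0 * μ)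
            - deriv a (ρ 0) * (-μ)) / (1 - 0 * μ)^2) 0 := by
    have hρ0U : ρ 0 ∈ U := by rw [hρ0]; exact hU0
    have hc0 : 1 - (0:ℝ) * μ ≠ 0 := by norm_num
    have Hρ := hρd 0 hc0
    have Haρ : HasDerivAt (fun x => a (ρ x)) (deriv a (ρ 0) * (1 / (1 - 0 * μ)^2)) 0 :=
      (hD1 _ hρ0U).comp 0 Hρ
    have Ha'ρ : HasDerivAt (fun x => deriv a (ρ x))
        (deriv (deriv a) (ρ 0) * (1 / (1 - 0 * μ)^2)) 0 :=
      (hD2 _ hρ0U).comp 0 Hρ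
    have hlin : HasDerivAt (fun x : ℝ => 1 - x * μ) (-μ) 0 := by
      simpa using (((hasDerivAt_id 0).mul_const μ).const_sub 1)
    exact (Haρ.const_mul (-μ)).add (Ha'ρ.div hlin hc0)
  obtain ⟨hfst, hsnd⟩ := deriv2_eq h1 h2
  constructor
  · rw [hfst]; simp only [hg1def, hρ0]; norm_num; try ring
  · rw [hsnd]; rw [hρ0]; field_simp; ring

lemma fundTensor_zero_dir (F : V → ℝ) (v : V) : fundTensor F v 0 0 = 0 := by
  unfold fundTensor
  simp

lemma diag_eval {A₀ : Set V} (hA₀open : IsOpen A₀) {F₀ : V → ℝ}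
    (hsm : ContDiffOn ℝ (⊤ : ℕ∞) F₀ (A₀ \ {0}))
    {v : V} (hv : v ∈ A₀) (hvne : v ≠ 0) (hF₀v : F₀ v ≠ 0) (w : V) :
    fundTensor F₀ v w w
        = (deriv (fun r : ℝ => F₀ (v + r • w)) 0) ^ 2
          + F₀ v * deriv (deriv (fun r : ℝ => F₀ (v + r • w))) 0
      ∧ DifferentiableAt ℝ (fun r : ℝ => (1 / 2) * (F₀ (v + r • w)) ^ 2) 0
      ∧ deriv (fun r : ℝ => (1 / 2) * (F₀ (v + r • w)) ^ 2) 0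
          = F₀ v * deriv (fun r : ℝ => F₀ (v + r • w)) 0 := by
  have haff : ContDiff ℝ (⊤ : ℕ∞) (fun r : ℝ => v + r • w) :=
    contDiff_const.add (contDiff_id.smul contDiff_const)
  have hUopen : IsOpen ((fun r : ℝ => v + r • w) ⁻¹' (A₀ \ {0})) :=
    (hA₀open.sdiff isClosed_singleton).preimage haff.continuous
  have hU0 : (0:ℝ) ∈ (fun r : ℝ => v + r • w) ⁻¹' (A₀ \ {0}) := by
    simp [hv, hvne]
  have ha : ContDiffOn ℝ (⊤ : ℕ∞) (fun r : ℝ => F₀ (v + r • w))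
      ((fun r : ℝ => v + r • w) ⁻¹' (A₀ \ {0})) :=
    hsm.comp haff.contDiffOn (fun r hr => hr)
  have ha0 : (fun r : ℝ => F₀ (v + r • w)) 0 ≠ 0 := by simpa using hF₀v
  obtain ⟨hdq, hq1, hq2⟩ := calc_main (ψ := fun _ => (1:ℝ)) hUopen hU0 ha ha0
    isOpen_univ contDiffOn_const 0 0 (mem_univ _)
  have hqfun : (fun r : ℝ => (1/2) * ((fun r : ℝ => F₀ (v + r • w)) r)^2
        * (fun _ : ℝ => (1:ℝ)) ((0 + r * 0) / (fun r : ℝ => F₀ (v + r • w)) r))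
      = (fun r : ℝ => (1 / 2) * (F₀ (v + r • w)) ^ 2) := by
    funext r; simp
  rw [hqfun] at hdq hq1 hq2
  simp only [deriv_const'] at hq1 hq2
  refine ⟨?_, hdq, ?_⟩
  · rw [fundTensor_diag, hq2]; simp
  · rw [hq1]; simp

lemma key {A₀ : Set V} (hA₀open : IsOpen A₀) {F₀ : V → ℝ}
    (hsm : ContDiffOn ℝ (⊤ : ℕ∞) F₀ (A₀ \ {0}))
    (hhom : ∀ x ∈ A₀, ∀ l : ℝ, 0 < l → F₀ (l • x) = l * F₀ x)
    (β : V →ₗ[ℝ] ℝ) {I : Set ℝ} (hIopen : IsOpen I)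
    {φ : ℝ → ℝ} (hφ : ContDiffOn ℝ (⊤ : ℕ∞) φ I)
    {v : V} (hv : v ∈ A₀) (hvne : v ≠ 0) (hF₀v : 0 < F₀ v) (w : V) :
    ∃ α a2 : ℝ,
      fundTensor F₀ v w w = α ^ 2 + F₀ v * a2 ∧
      fundTensor F₀ v v w = F₀ v * α ∧
      F₀ v * a2 = fundTensor F₀ v (w - (α / F₀ v) • v) (w - (α / F₀ v) • v) ∧
      (β v / F₀ v ∈ I →
        fundTensor (fun x => F₀ x * φ (β x / F₀ x)) v w w =
          (α ^ 2 + F₀ v * a2) * psiOf φ (β v / F₀ v)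
          + F₀ v * α * deriv (psiOf φ) (β v / F₀ v)
              * ((β w * F₀ v - β v * α) / (F₀ v) ^ 2)
          - (1/2) * β v * a2 * deriv (psiOf φ) (β v / F₀ v)
          + (1/2) * (F₀ v) ^ 2 * deriv (deriv (psiOf φ)) (β v / F₀ v)
              * ((β w * F₀ v - β v * α) / (F₀ v) ^ 2) ^ 2) := by
  have haff : ContDiff ℝ (⊤ : ℕ∞) (fun r : ℝ => v + r • w) :=
    contDiff_const.add (contDiff_id.smul contDiff_const)
  have hUopen : IsOpen ((fun r : ℝ => v + r • w) ⁻¹' (A₀ \ {0})) :=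
    (hA₀open.sdiff isClosed_singleton).preimage haff.continuous
  have hU0 : (0:ℝ) ∈ (fun r : ℝ => v + r • w) ⁻¹' (A₀ \ {0}) := by
    simp [hv, hvne]
  have ha : ContDiffOn ℝ (⊤ : ℕ∞) (fun r : ℝ => F₀ (v + r • w))
      ((fun r : ℝ => v + r • w) ⁻¹' (A₀ \ {0})) :=
    hsm.comp haff.contDiffOn (fun r hr => hr)
  have ha0 : (fun r : ℝ => F₀ (v + r • w)) 0 ≠ 0 := by simpa using hF₀v.ne'
  set α := deriv (fun r : ℝ => F₀ (v + r • w)) 0 with hαdef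
  set a2 := deriv (deriv (fun r : ℝ => F₀ (v + r • w))) 0 with ha2def
  obtain ⟨hE2a, _, hE2b'⟩ := diag_eval hA₀open hsm hv hvne hF₀v.ne' w
  refine ⟨α, a2, hE2a, ?_, ?_, ?_⟩
  · -- radial : fundTensor F₀ v v w = F₀ v * α
    obtain ⟨_, hdq, hq1⟩ := diag_eval hA₀open hsm hv hvne hF₀v.ne' w
    have hhom' : ∀ x ∈ A₀ \ {0}, ∀ l : ℝ, 0 < l → F₀ (l • x) = l * F₀ x :=
      fun x hx => hhom x hx.1
    have hv' : v ∈ A₀ \ {0} := ⟨hv, hvne⟩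
    rw [fundTensor_radial (hA₀open.sdiff isClosed_singleton) hhom' hv' w hdq, hq1]
  · -- u-trick : F₀ v * a2 = fundTensor F₀ v u u
    set μ := α / F₀ v with hμdef
    set u := w - μ • v with hudef
    set g := fun r : ℝ => F₀ (v + r • u) with hgdef
    have hg : g =ᶠ[𝓝 (0:ℝ)]
        fun r => (1 - r * μ) * (fun r : ℝ => F₀ (v + r • w)) (r / (1 - r * μ)) := by
      have h1 : ∀ᶠ r : ℝ in 𝓝 0, 1 - r * μ > 0 := by
        have : ContinuousAt (fun r : ℝ => 1 - r * μ) 0 := by fun_prop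
        apply this.eventually_mem (s := Ioi (0:ℝ))
        simpa using Ioi_mem_nhds (by norm_num : (0:ℝ) < 1)
      have hcont : ContinuousAt (fun r : ℝ => v + (r / (1 - r * μ)) • w) 0 := by
        apply ContinuousAt.add continuousAt_const
        apply ContinuousAt.smul _ continuousAt_const
        exact continuousAt_id.div (by fun_prop) (by norm_num)
      have h2 : ∀ᶠ r : ℝ in 𝓝 0, v + (r / (1 - r * μ)) • w ∈ A₀ := by
        apply hcont.eventually_mem
        simpa using hA₀open.mem_nhds hv
      filter_upwards [h1, h2] with r hr1 hr2
      have hne : (1 : ℝ) - r * μ ≠ 0 := ne_of_gt hr1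
      have hvec : v + r • u = (1 - r * μ) • (v + (r / (1 - r * μ)) • w) := by
        rw [smul_add, smul_smul, mul_div_cancel₀ _ hne, hudef]
        module
      rw [hgdef]
      simp only
      rw [hvec, hhom _ hr2 _ hr1]
    obtain ⟨hg1, hg2⟩ := calc_homog hUopen hU0 ha μ hg
    obtain ⟨hu2a, _, _⟩ := diag_eval hA₀open hsm hv hvne hF₀v.ne' u
    rw [hu2a, ← hgdef]
    have e1 : deriv g 0 = 0 := by
      rw [hg1]
      simp only [zero_smul, add_zero, hμdef, hαdef]
      field_simp
      ring
    rw [e1, hg2]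
    ring
  · -- main formula for F
    intro hsI
    obtain ⟨hdp, hp1, hp2⟩ := calc_main (ψ := psiOf φ) hUopen hU0 ha ha0
      hIopen (hφ.pow 2) (β v) (β w) (by simpa using hsI)
    have hpfun : (fun r : ℝ => (1/2) * ((fun r : ℝ => F₀ (v + r • w)) r)^2
          * psiOf φ ((β v + r * β w) / (fun r : ℝ => F₀ (v + r • w)) r))
        = (fun r : ℝ =>
            (1 / 2) * ((fun x => F₀ x * φ (β x / F₀ x)) (v + r • w)) ^ 2) := by
      funext r
      simp only [psiOf, map_add, map_smul, smul_eq_mul]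
      ring
    rw [hpfun] at hp2
    rw [fundTensor_diag, hp2, hαdef, ha2def]
    simp only [zero_smul, add_zero, zero_mul, mul_zero]
    try ring

lemma psi_derivs {I : Set ℝ} (hIopen : IsOpen I) {φ : ℝ → ℝ}
    (hφ : ContDiffOn ℝ (⊤ : ℕ∞) φ I) {s : ℝ} (hs : s ∈ I) :
    deriv (psiOf φ) s = 2 * φ s * deriv φ s ∧
    deriv (deriv (psiOf φ)) s
      = 2 * (deriv φ s) ^ 2 + 2 * φ s * deriv (deriv φ) s := by
  have hD1 := derivAt_of_contDiffOn hIopen hφ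
  have hD2 := derivAt_of_contDiffOn hIopen (deriv_contDiffOn hIopen hφ)
  have h1 : ∀ x ∈ I, HasDerivAt (psiOf φ) (2 * φ x * deriv φ x) x := by
    intro x hx
    have := (hD1 x hx).pow 2
    have h2 : HasDerivAt (psiOf φ) ((2:ℕ) * φ x ^ 1 * deriv φ x) x := this
    convert h2 using 1
    push_cast; ring
  have hev : deriv (psiOf φ) =ᶠ[𝓝 s] fun x => 2 * φ x * deriv φ x := by
    filter_upwards [hIopen.mem_nhds hs] with x hx using (h1 x hx).deriv
  refine ⟨(h1 s hs).deriv, ?_⟩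
  rw [hev.deriv_eq]
  have h2 : HasDerivAt (fun x => 2 * φ x * deriv φ x)
      (2 * (deriv φ s) ^ 2 + 2 * φ s * deriv (deriv φ) s) s := by
    have := ((hD1 s hs).const_mul 2).mul (hD2 s hs)
    refine this.congr_deriv ?_
    ring
  exact h2.deriv


/-- The `(F₀,β)`-metric `F = F₀ · φ(β/F₀)` is a Minkowski conic pseudo-norm, with an
explicit formula for its fundamental tensor; if `φ − s φ̇ > 0` and `φ̈ ≥ 0` on `I`, it is
a Minkowski conic norm. -/
theorem stmt16 {A₀ : Set V} {F₀ : V → ℝ} (hF₀ : IsMinkowskiConicNorm A₀ F₀)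
    (β : V →ₗ[ℝ] ℝ) (I : Set ℝ) (hIopen : IsOpen I) (hIinterval : I.OrdConnected)
    (φ : ℝ → ℝ) (hφ : ContDiffOn ℝ (⊤ : ℕ∞) φ I) (hφpos : ∀ s ∈ I, 0 < φ s)
    (A : Set V) (hAdef : A = {v : V | v ∈ A₀ ∧ v ≠ 0 ∧ β v / F₀ v ∈ I})
    (hAne : A.Nonempty)
    (F : V → ℝ) (hFdef : F = fun v => F₀ v * φ (β v / F₀ v)) :
    IsMinkowskiConicPseudoNorm A F ∧
    (∀ v ∈ A, ∀ w : V,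
      2 * fundTensor F v w w =
        phi1Of φ (β v / F₀ v) * angular F₀ v w
        + (1 / 2) * (psiOf φ (β v / F₀ v))⁻¹ * phi2Of φ (β v / F₀ v) *
            (β v / (F₀ v) ^ 2 * fundTensor F₀ v v w - β w) ^ 2
        + (1 / 2) * (psiOf φ (β v / F₀ v))⁻¹ *
            (phi1Of φ (β v / F₀ v) * fundTensor F₀ v v w / F₀ v
              + deriv (psiOf φ) (β v / F₀ v) * β w) ^ 2) ∧
    ((∀ s ∈ I, 0 < φ s - s * deriv φ s) → (∀ s ∈ I, 0 ≤ deriv (deriv φ) s) →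
      IsMinkowskiConicNorm A F) := by
  subst hAdef hFdef
  obtain ⟨hF₀pn, hF₀pd⟩ := hF₀
  obtain ⟨hA₀ne, hA₀open, hA₀cone⟩ := hF₀pn.conic
  have hF₀pos : ∀ x ∈ A₀, x ≠ 0 → 0 < F₀ x := fun x hx hxne =>
    lt_of_le_of_ne (hF₀pn.nonneg x hx) (fun h => hxne (hF₀pn.eq_zero x hx h.symm))
  have hopen₀ : IsOpen (A₀ \ {0}) := hA₀open.sdiff isClosed_singleton
  have hβsm : ContDiff ℝ (⊤ : ℕ∞) (fun x : V => β x) := by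
    have := (LinearMap.toContinuousLinearMap β).contDiff (n := ((⊤ : ℕ∞) : WithTop ℕ∞))
    simpa using this
  have hσcont : ContinuousOn (fun x => β x / F₀ x) (A₀ \ {0}) :=
    hβsm.continuous.continuousOn.div hF₀pn.smooth.continuousOn
      (fun x hx => (hF₀pos x hx.1 (by simpa using hx.2)).ne')
  have hAopen : IsOpen {v : V | v ∈ A₀ ∧ v ≠ 0 ∧ β v / F₀ v ∈ I} := by
    have hset : {v : V | v ∈ A₀ ∧ v ≠ 0 ∧ β v / F₀ v ∈ I}
        = (A₀ \ {0}) ∩ (fun x => β x / F₀ x) ⁻¹' I := by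
      ext x; simp only [mem_setOf_eq, mem_inter_iff, mem_diff, mem_singleton_iff,
        mem_preimage]; tauto
    rw [hset]
    exact hσcont.isOpen_inter_preimage hopen₀ hIopen
  have hconic : IsConicDomain {v : V | v ∈ A₀ ∧ v ≠ 0 ∧ β v / F₀ v ∈ I} := by
    refine ⟨hAne, hAopen, ?_⟩
    rintro x ⟨h1, h2, h3⟩ l hl
    refine ⟨hA₀cone x h1 l hl, smul_ne_zero (ne_of_gt hl) h2, ?_⟩
    rw [map_smul, smul_eq_mul, hF₀pn.homog x h1 l hl]
    rwa [mul_div_mul_left _ _ (ne_of_gt hl)]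
  have hFpos : ∀ x ∈ {v : V | v ∈ A₀ ∧ v ≠ 0 ∧ β v / F₀ v ∈ I},
      0 < F₀ x * φ (β x / F₀ x) := by
    rintro x ⟨h1, h2, h3⟩
    exact mul_pos (hF₀pos x h1 h2) (hφpos _ h3)
  have hpn : IsMinkowskiConicPseudoNorm {v : V | v ∈ A₀ ∧ v ≠ 0 ∧ β v / F₀ v ∈ I}
      (fun v => F₀ v * φ (β v / F₀ v)) := by
    refine ⟨hconic, fun x hx => (hFpos x hx).le,
      fun x hx h0 => absurd h0 (hFpos x hx).ne', ?_, ?_⟩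
    · rintro x ⟨h1, h2, h3⟩ l hl
      show F₀ (l • x) * φ (β (l • x) / F₀ (l • x)) = l * (F₀ x * φ (β x / F₀ x))
      rw [hF₀pn.homog x h1 l hl, map_smul, smul_eq_mul,
        mul_div_mul_left _ _ (ne_of_gt hl)]
      ring
    · have hsub : {v : V | v ∈ A₀ ∧ v ≠ 0 ∧ β v / F₀ v ∈ I} \ {0} ⊆ A₀ \ {0} :=
        fun x hx => ⟨hx.1.1, by simpa using hx.1.2.1⟩
      apply ContDiffOn.mul (hF₀pn.smooth.mono hsub)
      apply hφ.comp ?_ (fun x hx => hx.1.2.2)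
      exact (hβsm.contDiffOn).div (hF₀pn.smooth.mono hsub)
        (fun x hx => (hF₀pos x hx.1.1 hx.1.2.1).ne')
  have hform : ∀ v ∈ {v : V | v ∈ A₀ ∧ v ≠ 0 ∧ β v / F₀ v ∈ I}, ∀ w : V,
      2 * fundTensor (fun v => F₀ v * φ (β v / F₀ v)) v w w =
        phi1Of φ (β v / F₀ v) * angular F₀ v w
        + (1 / 2) * (psiOf φ (β v / F₀ v))⁻¹ * phi2Of φ (β v / F₀ v) *
            (β v / (F₀ v) ^ 2 * fundTensor F₀ v v w - β w) ^ 2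
        + (1 / 2) * (psiOf φ (β v / F₀ v))⁻¹ *
            (phi1Of φ (β v / F₀ v) * fundTensor F₀ v v w / F₀ v
              + deriv (psiOf φ) (β v / F₀ v) * β w) ^ 2 := by
    rintro v ⟨h1, h2, h3⟩ w
    obtain ⟨α, a2, hE2a, hE2b, hu, hE3⟩ :=
      key hA₀open hF₀pn.smooth hF₀pn.homog β hIopen hφ h1 h2 (hF₀pos v h1 h2) w
    have hPpos : 0 < psiOf φ (β v / F₀ v) := by
      simp only [psiOf]; exact pow_pos (hφpos _ h3) 2
    rw [hE3 h3, hE2b]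
    unfold angular
    rw [hE2a, hE2b]
    simp only [phi1Of, phi2Of]
    have ha0 : F₀ v ≠ 0 := (hF₀pos v h1 h2).ne'
    field_simp
    ring
  refine ⟨hpn, hform, ?_⟩
  intro hc1 hc2
  refine ⟨hpn, ?_⟩
  intro v hv _ w hwne
  obtain ⟨h1, h2, h3⟩ := hv
  obtain ⟨hP1eq, hP2eq⟩ := psi_derivs hIopen hφ h3
  have hφs := hφpos _ h3
  have ha0 : 0 < F₀ v := hF₀pos v h1 h2
  have hPpos : 0 < psiOf φ (β v / F₀ v) := by
    simp only [psiOf]; exact pow_pos hφs 2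
  have hφ1pos : 0 < phi1Of φ (β v / F₀ v) := by
    simp only [phi1Of, psiOf, hP1eq]
    nlinarith [mul_pos hφs (hc1 _ h3)]
  have hφ2nn : 0 ≤ phi2Of φ (β v / F₀ v) := by
    have heq : phi2Of φ (β v / F₀ v)
        = 4 * (φ (β v / F₀ v)) ^ 3 * deriv (deriv φ) (β v / F₀ v) := by
      simp only [phi2Of, psiOf, hP1eq, hP2eq]; ring
    rw [heq]
    exact mul_nonneg (by positivity) (hc2 _ h3)
  obtain ⟨α, a2, hE2a, hE2b, hu, hE3⟩ :=
    key hA₀open hF₀pn.smooth hF₀pn.homog β hIopen hφ h1 h2 ha0 w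
  by_cases hcase : w - (α / F₀ v) • v = 0
  · have hw : w = (α / F₀ v) • v := by rwa [sub_eq_zero] at hcase
    have hb1 : β w = α / F₀ v * β v := by rw [hw, map_smul, smul_eq_mul]
    have hαne : α ≠ 0 := by
      intro h; apply hwne; rw [hw, h]; simp
    have ha2 : a2 = 0 := by
      rw [hcase, fundTensor_zero_dir] at hu
      exact (mul_eq_zero.mp hu).resolve_left ha0.ne'
    rw [hE3 h3, hb1, ha2]
    have hred : (α ^ 2 + F₀ v * 0) * psiOf φ (β v / F₀ v)
          + F₀ v * α * deriv (psiOf φ) (β v / F₀ v)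
              * ((α / F₀ v * β v * F₀ v - β v * α) / (F₀ v) ^ 2)
          - (1/2) * β v * 0 * deriv (psiOf φ) (β v / F₀ v)
          + (1/2) * (F₀ v) ^ 2 * deriv (deriv (psiOf φ)) (β v / F₀ v)
              * ((α / F₀ v * β v * F₀ v - β v * α) / (F₀ v) ^ 2) ^ 2
        = α ^ 2 * psiOf φ (β v / F₀ v) := by
      field_simp
      ring
    rw [hred]
    have : 0 < α ^ 2 := by positivity
    exact mul_pos this hPpos
  · have hupos : 0 < F₀ v * a2 := by
      rw [hu]; exact hF₀pd v h1 h2 _ hcase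
    have hform' := hform v ⟨h1, h2, h3⟩ w
    have hang : angular F₀ v w = F₀ v * a2 := by
      unfold angular
      rw [hE2a, hE2b]
      field_simp
      ring
    rw [hang] at hform'
    have hT1 : 0 < phi1Of φ (β v / F₀ v) * (F₀ v * a2) := mul_pos hφ1pos hupos
    have hT2 : 0 ≤ (1 / 2) * (psiOf φ (β v / F₀ v))⁻¹ * phi2Of φ (β v / F₀ v) *
        (β v / (F₀ v) ^ 2 * fundTensor F₀ v v w - β w) ^ 2 :=
      mul_nonneg (mul_nonneg (mul_nonneg (by norm_num)
        (inv_nonneg.mpr hPpos.le)) hφ2nn) (sq_nonneg _)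
    have hT3 : 0 ≤ (1 / 2) * (psiOf φ (β v / F₀ v))⁻¹ *
        (phi1Of φ (β v / F₀ v) * fundTensor F₀ v v w / F₀ v
          + deriv (psiOf φ) (β v / F₀ v) * β w) ^ 2 :=
      mul_nonneg (mul_nonneg (by norm_num) (inv_nonneg.mpr hPpos.le)) (sq_nonneg _)
    linarith
end
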